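/- arXiv:1412.6803 — 2 statements merged into one kernel-verified Lean document; each statement's English description precedes it below -/
import Mathlib

section
/- Let k be a positive integer, let α > 0 be a real number, and let G be a finite simple graph with maximum average degree mad(G) < k and maximum degree Δ(G) ≥ ((3α+1)/(2α))·k − 2. Then G admits an incidence (Δ(G) + ⌊(1+α)k⌋ − 1, ⌊(1+α)k⌋ − 1)-coloring. -/
open SimpleGraph

/-- An incidence coloring of `G` with `n` colors, where `φ v u` is the color of the
incidence `(v, vu)` (meaningful when `G.Adj v u`): two distinct adjacent incidences
`(v, vu)` and `(w, wx)` receive distinct colors. Incidences `(v, e)` and `(w, f)` are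
adjacent if `v = w`, or `e = f`, or the edge `vw` equals `e` or `f`. -/
def IsIncidenceColoring {V : Type*} (G : SimpleGraph V) {n : ℕ} (φ : V → V → Fin n) : Prop :=
  ∀ ⦃v u w x : V⦄, G.Adj v u → G.Adj w x → (v, u) ≠ (w, x) →
    (v = w ∨ s(v, u) = s(w, x) ∨ s(v, w) = s(v, u) ∨ s(v, w) = s(w, x)) →
    φ v u ≠ φ w x

/-- `G` admits an incidence `(n, ℓ)`-coloring: an incidence coloring with `n` colors such
that for every vertex `v`, at most `ℓ` distinct colors appear on the incidences of the
form `(u, uv)` where `u` ranges over the neighbors of `v`. -/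
def HasIncidenceColoring {V : Type*} (G : SimpleGraph V) (n ℓ : ℕ) : Prop :=
  ∃ φ : V → V → Fin n, IsIncidenceColoring G φ ∧
    ∀ v : V, ({c : Fin n | ∃ u : V, G.Adj u v ∧ φ u v = c}).ncard ≤ ℓ

/-- The incidence chromatic number: the least `n` such that `G` admits an incidence
`n`-coloring. -/
noncomputable def incChromaticNumber {V : Type*} (G : SimpleGraph V) : ℕ :=
  sInf {n : ℕ | ∃ φ : V → V → Fin n, IsIncidenceColoring G φ}

/-- `mad(G) < q`: every nonempty subgraph `H` of `G` satisfies `2|E(H)| < q·|V(H)|`. -/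
def MadLT {V : Type*} (G : SimpleGraph V) (q : ℝ) : Prop :=
  ∀ H : G.Subgraph, H.verts.Nonempty →
    (2 * H.edgeSet.ncard : ℝ) < q * H.verts.ncard

/-!
Induction on the edges. Write `ℓ = ⌊(1 + α)k⌋ - 1`, so that `Δ + ℓ` colors are available, and
call an edge `uz` heavy if `d(u) + d(z) > Δ`. A vertex `z` is reducible if `0 < d(z) ≤ ℓ` and
`d(z)` plus the number of heavy edges at `z` is at most `ℓ + 1`.

If `z` is reducible, color `G` minus the edges at `z` and extend. At a neighbor `u` of `z` at
least `Δ + 1 - d(u)` colors are free for the incidence `(u, uz)`; this exceeds `d(z)` unless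
`uz` is heavy. So first give the incidences `(u, uz)` on heavy edges a free color, then color
the incidences `(z, zu)` by Hall's theorem avoiding those colors (and inside the colors already
entering `u` when there are `ℓ` of them), and finally color the remaining `(u, uz)`.

A reducible vertex exists by discharging: each non-isolated vertex `v` gets charge `d(v) - k`,
of negative total as `mad(G) < k`, and each vertex sends `(k - d(v)) / (ℓ + 2 - d(v))` along
every heavy edge to a neighbor `v` with `d(v) < k`. Without reducible vertices a vertex of degree `< k` has at least
`ℓ + 2 - d(v)` heavy edges, while the lower bound on `Δ`, in the `α`-free form
`k (3τ + k) ≤ 2τ (Δ + 2)` with `τ = ℓ + 2 - k`, keeps every sender nonnegative.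
-/

open Finset

section admissibleColors

variable {ι C : Type*} [Fintype C] [DecidableEq C]

variable (ℓ : ℕ) (Out In : ι → Finset C) (A : Finset C) in
/-- When `ℓ` colors already enter `u`, a new incoming color has to repeat one of them. -/
def admissibleColors (u : ι) : Finset C :=
  if #(In u) = ℓ then In u \ A else (Out u ∪ A)ᶜ

variable {ℓ : ℕ} {Out In : ι → Finset C} {A : Finset C}

theorem admissibleColors_of_card_eq {u : ι} (hu : #(In u) = ℓ) :
    admissibleColors ℓ Out In A u = In u \ A :=
  if_pos hu

theorem le_card_admissibleColors_add {u : ι} (hOut : #(Out u) + ℓ + 1 ≤ Fintype.card C)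
    (hu : #(In u) ≠ ℓ) : ℓ + 1 ≤ #(admissibleColors ℓ Out In A u) + #A := by
  have := card_union_le (Out u) A
  have := card_compl (Out u ∪ A)
  simp only [admissibleColors, hu, if_false]
  omega

theorem notMem_of_mem_admissibleColors (hdisj : ∀ u, Disjoint (Out u) (In u)) {u : ι} {c : C}
    (hc : c ∈ admissibleColors ℓ Out In A u) :
    c ∉ Out u ∧ c ∉ A ∧ (#(In u) = ℓ → c ∈ In u) := by
  by_cases hu : #(In u) = ℓ
  · rw [admissibleColors_of_card_eq hu, mem_sdiff] at hc
    exact ⟨fun h => disjoint_left.1 (hdisj u) h hc.1, hc.2, fun _ => hc.1⟩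
  · simp only [admissibleColors, hu, if_false, mem_compl, mem_union, not_or] at hc
    exact ⟨hc.1, hc.2, fun h => absurd h hu⟩

variable [Fintype ι]

theorem card_le_card_biUnion_admissibleColors (hιℓ : Fintype.card ι ≤ ℓ)
    (hιA : Fintype.card ι + #A ≤ ℓ + 1) (hOut : ∀ u, #(Out u) + ℓ + 1 ≤ Fintype.card C)
    (hA : ∀ c ∈ A, ∃ u, c ∉ In u) (U : Finset ι) :
    #U ≤ #(U.biUnion (admissibleColors ℓ Out In A)) := by
  have hU := card_le_univ U
  by_cases hopen : ∃ i ∈ U, #(In i) ≠ ℓ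
  · obtain ⟨i, hi, hi'⟩ := hopen
    have := le_card_admissibleColors_add (A := A) (hOut i) hi'
    have := card_le_card (subset_biUnion_of_mem (admissibleColors ℓ Out In A) hi)
    omega
  push Not at hopen
  rcases U.eq_empty_or_nonempty with rfl | ⟨i, hi⟩
  · simp
  have hSi := card_le_card (subset_biUnion_of_mem (admissibleColors ℓ Out In A) hi)
  rw [admissibleColors_of_card_eq (hopen i hi)] at hSi
  by_cases hsmall : #U + #A ≤ ℓ
  · have := le_card_sdiff A (In i)
    rw [hopen i hi] at this
    omega
  obtain rfl : U = univ := eq_univ_of_card U (by omega)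
  simp only [mem_univ, forall_const] at hopen
  by_cases hsame : ∀ j, In j = In i
  · have hAi : Disjoint (In i) A := disjoint_right.2 fun c hc => by
      obtain ⟨u, hu⟩ := hA c hc
      rwa [hsame u] at hu
    rw [hAi.sdiff_eq_left, hopen i] at hSi
    omega
  push Not at hsame
  obtain ⟨j, hj⟩ := hsame
  have hunion : ℓ + 1 ≤ #(In i ∪ In j) := by
    by_contra! hle
    have hi' := eq_of_subset_of_card_le (subset_union_left (s₂ := In j)) (by rw [hopen i]; omega)
    have hj' := eq_of_subset_of_card_le (subset_union_right (s₁ := In i)) (by rw [hopen j]; omega)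
    exact hj (hj'.trans hi'.symm)
  have hsub : (In i ∪ In j) \ A ⊆ univ.biUnion (admissibleColors ℓ Out In A) := by
    rw [union_sdiff_distrib, ← admissibleColors_of_card_eq (hopen i),
      ← admissibleColors_of_card_eq (hopen j)]
    exact union_subset (subset_biUnion_of_mem _ (mem_univ i)) (subset_biUnion_of_mem _ (mem_univ j))
  have := card_le_card hsub
  have := le_card_sdiff A (In i ∪ In j)
  omega

/-- `Out u` and `In u` stand for the colors leaving and entering a neighbor `u` of the vertex
`z` being recolored: `f u` is meant for the incidence `(z, zu)`, `g u` for `(u, uz)`. -/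
theorem exists_outgoing_incoming_colors (T : Finset ι) (hιℓ : Fintype.card ι ≤ ℓ)
    (hιT : Fintype.card ι + #T ≤ ℓ + 1) (hOut : ∀ u, #(Out u) + ℓ + 1 ≤ Fintype.card C)
    (hIn : ∀ u, #(In u) ≤ ℓ)
    (hT : ∀ u ∉ T, Fintype.card ι + #(Out u) + ℓ < Fintype.card C)
    (hdisj : ∀ u, Disjoint (Out u) (In u)) :
    ∃ f g : ι → C, Function.Injective f ∧
      (∀ u, f u ∉ Out u ∧ (#(In u) = ℓ → f u ∈ In u)) ∧
      ∀ u, g u ∉ Out u ∧ g u ∉ In u ∧ ∀ w, g u ≠ f w := by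
  have hfree (u : ι) : Fintype.card C ≤ #(Out u ∪ In u)ᶜ + #(Out u) + ℓ := by
    have := card_union_le (Out u) (In u)
    have := card_compl (Out u ∪ In u)
    have := hIn u
    omega
  have (u : ι) : ∃ c, c ∉ Out u ∧ c ∉ In u := by
    obtain ⟨c, hc⟩ : (Out u ∪ In u)ᶜ.Nonempty :=
      card_pos.1 (by have := hfree u; have := hOut u; omega)
    exact ⟨c, by simpa using hc⟩
  choose c hc using this
  obtain ⟨f, hf_inj, hf⟩ := (all_card_le_biUnion_card_iff_exists_injective _).1
    (card_le_card_biUnion_admissibleColors (A := T.image c) hιℓ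
      (by have := card_image_le (s := T) (f := c); omega) hOut
      (by simp only [mem_image]; rintro _ ⟨u, -, rfl⟩; exact ⟨u, (hc u).2⟩))
  replace hf (u : ι) := notMem_of_mem_admissibleColors hdisj (hf u)
  have (u : ι) : ∃ b, b ∉ Out u ∧ b ∉ In u ∧ ∀ w, b ≠ f w := by
    by_cases hu : u ∈ T
    · exact ⟨c u, (hc u).1, (hc u).2, fun w h => (hf w).2.1 (h ▸ mem_image_of_mem c hu)⟩
    obtain ⟨b, hb⟩ : ((Out u ∪ In u)ᶜ \ univ.image f).Nonempty := by
      apply card_pos.1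
      have := le_card_sdiff (univ.image f) (Out u ∪ In u)ᶜ
      have := card_image_le (s := univ) (f := f)
      have := hfree u
      have := hT u hu
      rw [card_univ] at *
      omega
    simp only [mem_sdiff, mem_compl, mem_union, not_or, mem_image, mem_univ, true_and,
      not_exists] at hb
    exact ⟨b, hb.1.1, hb.1.2, fun w h => hb.2 w h.symm⟩
  choose g hg using this
  exact ⟨f, g, hf_inj, fun u => ⟨(hf u).1, (hf u).2.2⟩, hg⟩

end admissibleColors

namespace SimpleGraph

variable {V : Type*} {G : SimpleGraph V} {n : ℕ} {φ : V → V → Fin n}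

theorem isIncidenceColoring_iff :
    IsIncidenceColoring G φ ↔
      (∀ ⦃v u x⦄, G.Adj v u → G.Adj v x → u ≠ x → φ v u ≠ φ v x) ∧
      ∀ ⦃v u x⦄, G.Adj v u → G.Adj u x → φ v u ≠ φ u x := by
  refine ⟨fun h => ⟨fun v u x hu hx hux => h hu hx (by simp [hux]) (Or.inl rfl),
    fun v u x hu hx => h hu hx (by simp [hu.ne]) (Or.inr (Or.inr (Or.inl rfl)))⟩, ?_⟩
  rintro ⟨hout, hpath⟩ v u w x hvu hwx hne hadj
  rcases hadj with rfl | h | h | h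
  · exact hout hvu hwx fun hux => hne (by rw [hux])
  · rcases Sym2.eq_iff.1 h with ⟨rfl, rfl⟩ | ⟨rfl, rfl⟩
    · exact absurd rfl hne
    · exact hpath hvu hwx
  · rcases Sym2.eq_iff.1 h with ⟨-, rfl⟩ | ⟨rfl, -⟩
    · exact hpath hvu hwx
    · exact absurd rfl hvu.ne
  · rcases Sym2.eq_iff.1 h with ⟨rfl, rfl⟩ | ⟨rfl, -⟩
    · exact absurd rfl hwx.ne
    · exact (hpath hwx hvu).symm

section extendAt

variable [DecidableEq V] [DecidableRel G.Adj] {z : V} {f g : G.neighborSet z → Fin n}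

variable (G) in
def extendAt (z : V) (φ : V → V → Fin n) (f g : G.neighborSet z → Fin n) :
    V → V → Fin n := fun a b =>
  if hb : a = z ∧ G.Adj z b then f ⟨b, hb.2⟩
  else if ha : b = z ∧ G.Adj z a then g ⟨a, ha.2⟩ else φ a b

theorem extendAt_left {b : V} (hb : G.Adj z b) : G.extendAt z φ f g z b = f ⟨b, hb⟩ := by
  simp [extendAt, hb]

theorem extendAt_right {a : V} (ha : G.Adj z a) : G.extendAt z φ f g a z = g ⟨a, ha⟩ := by
  simp [extendAt, ha, ha.ne']

theorem extendAt_of_ne {a b : V} (ha : a ≠ z) (hb : b ≠ z) :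
    G.extendAt z φ f g a b = φ a b := by
  simp [extendAt, ha, hb]

theorem isIncidenceColoring_extendAt (hφ : IsIncidenceColoring (G.deleteIncidenceSet z) φ)
    (hf_inj : Function.Injective f)
    (hf : ∀ (u : G.neighborSet z) x, (G.deleteIncidenceSet z).Adj u x → f u ≠ φ u x)
    (hg_out : ∀ (u : G.neighborSet z) x, (G.deleteIncidenceSet z).Adj u x → g u ≠ φ u x)
    (hg_in : ∀ (u : G.neighborSet z) w, (G.deleteIncidenceSet z).Adj w u → g u ≠ φ w u)
    (hgf : ∀ u w, g u ≠ f w) :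
    IsIncidenceColoring G (G.extendAt z φ f g) := by
  obtain ⟨hφout, hφpath⟩ := isIncidenceColoring_iff.1 hφ
  have hH {a b : V} (hab : G.Adj a b) (ha : a ≠ z) (hb : b ≠ z) :
      (G.deleteIncidenceSet z).Adj a b :=
    deleteIncidenceSet_adj.2 ⟨hab, ha, hb⟩
  refine isIncidenceColoring_iff.2 ⟨fun v u x hvu hvx hux => ?_, fun v u x hvu hux => ?_⟩
  · by_cases hv : v = z
    · subst hv
      rw [extendAt_left hvu, extendAt_left hvx]
      exact hf_inj.ne fun h => hux (congrArg Subtype.val h)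
    by_cases hu : u = z
    · subst hu
      have hx : x ≠ u := Ne.symm hux
      rw [extendAt_right hvu.symm, extendAt_of_ne hv hx]
      exact hg_out ⟨v, hvu.symm⟩ x (hH hvx hv hx)
    by_cases hx : x = z
    · subst hx
      rw [extendAt_of_ne hv hu, extendAt_right hvx.symm]
      exact (hg_out ⟨v, hvx.symm⟩ u (hH hvu hv hu)).symm
    rw [extendAt_of_ne hv hu, extendAt_of_ne hv hx]
    exact hφout (hH hvu hv hu) (hH hvx hv hx) hux
  · by_cases hv : v = z
    · subst hv
      rw [extendAt_left hvu]
      by_cases hx : x = v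
      · subst hx
        rw [extendAt_right hvu]
        exact (hgf _ _).symm
      rw [extendAt_of_ne hvu.ne' hx]
      exact hf ⟨u, hvu⟩ x (hH hux hvu.ne' hx)
    by_cases hu : u = z
    · subst hu
      rw [extendAt_right hvu.symm, extendAt_left hux]
      exact hgf _ _
    by_cases hx : x = z
    · subst hx
      rw [extendAt_of_ne hv hu, extendAt_right hux.symm]
      exact (hg_in ⟨u, hux.symm⟩ v (hH hvu hv hu)).symm
    rw [extendAt_of_ne hv hu, extendAt_of_ne hu hx]
    exact hφpath (hH hvu hv hu) (hH hux hu hx)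

end extendAt

variable [Fintype V] [DecidableRel G.Adj]

variable (G) in
def inColors (φ : V → V → Fin n) (v : V) : Finset (Fin n) :=
  (G.neighborFinset v).image (φ · v)

variable (G) in
def outColors (φ : V → V → Fin n) (v : V) : Finset (Fin n) :=
  (G.neighborFinset v).image (φ v)

theorem mem_inColors {v : V} {c : Fin n} :
    c ∈ G.inColors φ v ↔ ∃ u, G.Adj u v ∧ φ u v = c := by
  simp [inColors, adj_comm]

theorem mem_outColors {v : V} {c : Fin n} :
    c ∈ G.outColors φ v ↔ ∃ x, G.Adj v x ∧ φ v x = c := by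
  simp [outColors]

theorem card_outColors_le (v : V) : #(G.outColors φ v) ≤ G.degree v := card_image_le

theorem hasIncidenceColoring_iff {ℓ : ℕ} :
    HasIncidenceColoring G n ℓ ↔
      ∃ φ : V → V → Fin n, IsIncidenceColoring G φ ∧ ∀ v, #(G.inColors φ v) ≤ ℓ := by
  have (φ : V → V → Fin n) (v : V) :
      {c | ∃ u, G.Adj u v ∧ φ u v = c} = (G.inColors φ v : Set (Fin n)) := by
    ext
    simp [mem_inColors]
  simp only [HasIncidenceColoring, this, Set.ncard_coe_finset]

theorem _root_.IsIncidenceColoring.disjoint_outColors_inColors (hφ : IsIncidenceColoring G φ)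
    (v : V) : Disjoint (G.outColors φ v) (G.inColors φ v) := by
  simp only [Finset.disjoint_left, mem_outColors, mem_inColors]
  rintro _ ⟨x, hvx, rfl⟩ ⟨u, huv, hc⟩
  exact (isIncidenceColoring_iff.1 hφ).2 huv hvx hc

theorem degree_deleteIncidenceSet_lt [DecidableEq V] {u z : V} (h : G.Adj u z) :
    (G.deleteIncidenceSet z).degree u < G.degree u := by
  refine card_lt_card ⟨fun w hw => ?_, fun hsub => ?_⟩
  · simp only [mem_neighborFinset, deleteIncidenceSet_adj] at hw ⊢
    exact hw.1
  · have := hsub ((G.mem_neighborFinset u z).2 h)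
    simp [deleteIncidenceSet_adj] at this

variable (G) in
def heavyNeighborFinset (Δ : ℕ) (z : V) : Finset V :=
  {u ∈ G.neighborFinset z | Δ < G.degree u + G.degree z}

variable (G) in
def IsReducible (Δ ℓ : ℕ) (z : V) : Prop :=
  0 < G.degree z ∧ G.degree z ≤ ℓ ∧ G.degree z + #(G.heavyNeighborFinset Δ z) ≤ ℓ + 1

theorem card_inColors_extendAt_le [DecidableEq V] {z : V} {φ : V → V → Fin n}
    {f g : G.neighborSet z → Fin n} {ℓ : ℕ} (hzℓ : G.degree z ≤ ℓ)
    (hφℓ : ∀ v, #((G.deleteIncidenceSet z).inColors φ v) ≤ ℓ)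
    (hf : ∀ u : G.neighborSet z, #((G.deleteIncidenceSet z).inColors φ u) = ℓ →
      f u ∈ (G.deleteIncidenceSet z).inColors φ u) (v : V) :
    #(G.inColors (G.extendAt z φ f g) v) ≤ ℓ := by
  have hold {u : V} (huv : G.Adj u v) (hu : u ≠ z) (hv : v ≠ z) :
      G.extendAt z φ f g u v ∈ (G.deleteIncidenceSet z).inColors φ v := by
    rw [extendAt_of_ne hu hv]
    exact mem_inColors.2 ⟨u, deleteIncidenceSet_adj.2 ⟨huv, hu, hv⟩, rfl⟩
  by_cases hv : v = z
  · subst hv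
    calc #(G.inColors (G.extendAt v φ f g) v) ≤ #(univ.image g) := card_le_card fun c hc => by
          obtain ⟨u, huv, rfl⟩ := mem_inColors.1 hc
          rw [extendAt_right huv.symm]
          exact mem_image_of_mem g (mem_univ _)
      _ ≤ G.degree v := card_image_le.trans_eq (by rw [card_univ, card_neighborSet_eq_degree])
      _ ≤ ℓ := hzℓ
  by_cases hzv : G.Adj z v
  · have hsub : G.inColors (G.extendAt z φ f g) v ⊆
        insert (f ⟨v, hzv⟩) ((G.deleteIncidenceSet z).inColors φ v) := fun c hc => by
      obtain ⟨u, huv, rfl⟩ := mem_inColors.1 hc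
      by_cases hu : u = z
      · subst hu
        rw [extendAt_left hzv]
        exact mem_insert_self _ _
      exact mem_insert_of_mem (hold huv hu hv)
    by_cases hfull : #((G.deleteIncidenceSet z).inColors φ v) = ℓ
    · rw [insert_eq_of_mem (hf ⟨v, hzv⟩ hfull)] at hsub
      exact (card_le_card hsub).trans hfull.le
    · have := hφℓ v
      have := card_insert_le (f ⟨v, hzv⟩) ((G.deleteIncidenceSet z).inColors φ v)
      have := card_le_card hsub
      omega
  refine (card_le_card fun c hc => ?_).trans (hφℓ v)
  obtain ⟨u, huv, rfl⟩ := mem_inColors.1 hc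
  exact hold huv (by rintro rfl; exact hzv huv) hv

theorem _root_.HasIncidenceColoring.of_deleteIncidenceSet {Δ ℓ : ℕ} {z : V}
    (hΔ : ∀ v, G.degree v ≤ Δ) (hz : G.IsReducible Δ ℓ z)
    (h : HasIncidenceColoring (G.deleteIncidenceSet z) (Δ + ℓ) ℓ) :
    HasIncidenceColoring G (Δ + ℓ) ℓ := by
  classical
  obtain ⟨-, hzℓ, hzheavy⟩ := hz
  set H := G.deleteIncidenceSet z
  obtain ⟨φ, hφ, hφℓ⟩ := hasIncidenceColoring_iff.1 h
  let T := (G.heavyNeighborFinset Δ z).subtype (· ∈ G.neighborSet z)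
  have hT : #T ≤ #(G.heavyNeighborFinset Δ z) := by
    rw [card_subtype]
    exact card_filter_le _ _
  have hdeg (u : G.neighborSet z) : #(H.outColors φ u) + 1 ≤ G.degree u :=
    (card_outColors_le (u : V)).trans_lt (degree_deleteIncidenceSet_lt u.2.symm)
  obtain ⟨f, g, hf_inj, hf, hg⟩ := exists_outgoing_incoming_colors (ι := G.neighborSet z)
    (Out := fun u => H.outColors φ u) (In := fun u => H.inColors φ u) T
    (by rwa [card_neighborSet_eq_degree])
    (by rw [card_neighborSet_eq_degree]; omega)
    (fun u => by have := hdeg u; have := hΔ u; simp only [Fintype.card_fin]; omega)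
    (fun u => hφℓ u)
    (fun u hu => by
      have := hdeg u
      simp only [T, heavyNeighborFinset, mem_subtype, mem_filter, mem_neighborFinset, not_and,
        not_lt] at hu
      have := hu u.2
      rw [card_neighborSet_eq_degree, Fintype.card_fin]
      omega)
    (fun u => hφ.disjoint_outColors_inColors u)
  refine hasIncidenceColoring_iff.2 ⟨G.extendAt z φ f g, ?_,
    card_inColors_extendAt_le hzℓ hφℓ fun u => (hf u).2⟩
  refine isIncidenceColoring_extendAt hφ hf_inj (fun u x hux h => (hf u).1 ?_)
    (fun u x hux h => (hg u).1 ?_) (fun u w hwu h => (hg u).2.1 ?_) fun u w => (hg u).2.2 w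
  · exact mem_outColors.2 ⟨x, hux, h.symm⟩
  · exact mem_outColors.2 ⟨x, hux, h.symm⟩
  · exact mem_inColors.2 ⟨w, hwu, h.symm⟩

end SimpleGraph

/-- The charge a vertex of degree `x < k` receives along each heavy edge; without reducible
vertices it has at least `ℓ + 2 - x` of them. -/
noncomputable def dischargeWeight (k ℓ : ℕ) (x : ℝ) : ℝ := (k - x) / (ℓ + 2 - x)

section dischargeWeight

variable {k ℓ : ℕ} {x : ℝ}

theorem dischargeWeight_nonneg (hkℓ : k ≤ ℓ + 1) (hx : x ≤ k) :
    0 ≤ dischargeWeight k ℓ x := by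
  have : (k : ℝ) ≤ ℓ + 1 := by exact_mod_cast hkℓ
  exact div_nonneg (by linarith) (by linarith)

theorem sub_mul_dischargeWeight (hx : x < ℓ + 2) :
    (ℓ + 2 - x) * dischargeWeight k ℓ x = k - x :=
  mul_div_cancel₀ _ (by linarith)

theorem two_mul_le_add_two_of_bound {Δ : ℕ}
    (hbound : (k : ℝ) * (3 * (ℓ + 2 - k) + k) ≤ 2 * (ℓ + 2 - k) * (Δ + 2))
    (hkℓ : k ≤ ℓ + 1) (hℓk : ℓ + 4 ≤ 2 * k) : 2 * k ≤ Δ + 2 := by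
  have h1 : (k : ℝ) ≤ ℓ + 1 := by exact_mod_cast hkℓ
  have h2 : (ℓ : ℝ) + 4 ≤ 2 * k := by exact_mod_cast hℓk
  have : (2 * k : ℝ) ≤ Δ + 2 := by nlinarith
  exact_mod_cast this

theorem mul_dischargeWeight_le {Δ : ℕ} {d : ℝ}
    (hbound : (k : ℝ) * (3 * (ℓ + 2 - k) + k) ≤ 2 * (ℓ + 2 - k) * (Δ + 2))
    (hkℓ : k ≤ ℓ + 1) (hx : ℓ + 2 ≤ 2 * x) (hxd : Δ + 1 ≤ d + x) (hxk : x + 1 ≤ k) :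
    d * dischargeWeight k ℓ x ≤ d - k := by
  have h1 : (k : ℝ) ≤ ℓ + 1 := by exact_mod_cast hkℓ
  have hpos : (0 : ℝ) < ℓ + 2 - x := by linarith
  rw [dischargeWeight, mul_div_assoc', div_le_iff₀ hpos]
  -- i.e. `k (ℓ + 2 - x) ≤ d (ℓ + 2 - k)`; both cases reduce to `x = (ℓ + 2) / 2, d = Δ + 1 - x`
  rcases le_total ((Δ : ℝ) + 1 - (ℓ + 2) / 2) d with hd | hd
  · nlinarith
  · nlinarith

end dischargeWeight

theorem MadLT.mono {V : Type*} {G H : SimpleGraph V} {q : ℝ} (h : MadLT G q) (hHG : H ≤ G) :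
    MadLT H q := fun S hS =>
  h { verts := S.verts, Adj := S.Adj, adj_sub := fun hab => hHG (S.adj_sub hab),
      edge_vert := S.edge_vert, symm := S.symm } hS

theorem MadLT.sum_degree_lt {V : Type*} [Fintype V] {G : SimpleGraph V} [DecidableRel G.Adj]
    {q : ℝ} (h : MadLT G q) (hG : ∃ v, 0 < G.degree v) :
    ∑ v, (G.degree v : ℝ) < q * #{v | 0 < G.degree v} := by
  let S : G.Subgraph :=
    { verts := G.support, Adj := G.Adj, adj_sub := id, edge_vert := (⟨_, ·⟩), symm := G.symm }
  have hverts : S.verts = ↑({v | 0 < G.degree v} : Finset V) := by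
    ext
    simp [S, degree_pos_iff_mem_support]
  have hedges : S.edgeSet = ↑G.edgeFinset := G.coe_edgeFinset.symm
  obtain ⟨v, hv⟩ := hG
  have := h S ⟨v, (G.degree_pos_iff_mem_support v).1 hv⟩
  rw [hverts, hedges, Set.ncard_coe_finset, Set.ncard_coe_finset] at this
  rwa [← Nat.cast_sum, sum_degrees_eq_twice_card_edges, Nat.cast_mul, Nat.cast_two]

namespace SimpleGraph

variable {V : Type*} [Fintype V] {G : SimpleGraph V} [DecidableRel G.Adj] {k ℓ Δ : ℕ}

theorem le_degree_add_card_heavyNeighborFinset_of_not_isReducible {v : V} (hkℓ : k ≤ ℓ + 1)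
    (hv : 0 < G.degree v) (hvk : G.degree v < k) (hnr : ¬G.IsReducible Δ ℓ v) :
    ℓ + 2 ≤ G.degree v + #(G.heavyNeighborFinset Δ v) := by
  unfold IsReducible at hnr
  omega

theorem le_two_mul_degree_of_not_isReducible {v : V} (hkℓ : k ≤ ℓ + 1) (hv : 0 < G.degree v)
    (hvk : G.degree v < k) (hnr : ¬G.IsReducible Δ ℓ v) : ℓ + 2 ≤ 2 * G.degree v := by
  have := le_degree_add_card_heavyNeighborFinset_of_not_isReducible hkℓ hv hvk hnr
  have : #(G.heavyNeighborFinset Δ v) ≤ G.degree v := card_filter_le _ _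
  omega

variable (G k ℓ Δ) in
noncomputable def transfer (u v : V) : ℝ :=
  if G.Adj u v ∧ Δ < G.degree u + G.degree v ∧ G.degree v < k then
    dischargeWeight k ℓ (G.degree v) else 0

theorem transfer_nonneg (hkℓ : k ≤ ℓ + 1) (u v : V) : 0 ≤ G.transfer k ℓ Δ u v := by
  unfold transfer
  split_ifs with h
  · exact dischargeWeight_nonneg hkℓ (by exact_mod_cast h.2.2.le)
  · rfl

theorem adj_of_transfer_ne_zero {u v : V} (h : G.transfer k ℓ Δ u v ≠ 0) : G.Adj u v := by
  unfold transfer at h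
  split_ifs at h with h'
  exacts [h'.1, absurd rfl h]

theorem transfer_eq_zero_of_le_degree {u v : V} (hkv : k ≤ G.degree v) :
    G.transfer k ℓ Δ u v = 0 :=
  if_neg fun h => (h.2.2.trans_le hkv).false

theorem sum_inflow_sub_outflow_eq_zero (p : V → V → ℝ)
    (hp : ∀ u v, p u v ≠ 0 → G.Adj u v) :
    ∑ v ∈ {v | 0 < G.degree v}, (∑ u, p u v - ∑ u, p v u) = 0 := by
  rw [sum_subset (subset_univ _) fun v _ hv => ?_, sum_sub_distrib, sum_comm, sub_self]
  have hv : ∀ u, ¬G.Adj v u := by simpa [degree_pos_iff_exists_adj] using hv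
  rw [sum_eq_zero fun u _ => not_imp_comm.1 (hp u v) fun h => hv u h.symm,
    sum_eq_zero fun u _ => not_imp_comm.1 (hp v u) (hv u), sub_self]

section discharging

variable (hkℓ : k ≤ ℓ + 1)
  (hbound : (k : ℝ) * (3 * (ℓ + 2 - k) + k) ≤ 2 * (ℓ + 2 - k) * (Δ + 2))
include hkℓ

theorem sub_le_sum_transfer {v : V} (hv : 0 < G.degree v) (hvk : G.degree v < k)
    (hnr : ¬G.IsReducible Δ ℓ v) :
    (k : ℝ) - G.degree v ≤ ∑ u, G.transfer k ℓ Δ u v := by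
  have hheavy : (ℓ : ℝ) + 2 ≤ G.degree v + #(G.heavyNeighborFinset Δ v) := by
    exact_mod_cast le_degree_add_card_heavyNeighborFinset_of_not_isReducible hkℓ hv hvk hnr
  have hvk' : (G.degree v : ℝ) < k := by exact_mod_cast hvk
  have hkℓ' : (k : ℝ) ≤ ℓ + 1 := by exact_mod_cast hkℓ
  calc (k : ℝ) - G.degree v
      = (ℓ + 2 - G.degree v) * dischargeWeight k ℓ (G.degree v) :=
        (sub_mul_dischargeWeight (by linarith)).symm
    _ ≤ #(G.heavyNeighborFinset Δ v) * dischargeWeight k ℓ (G.degree v) :=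
        mul_le_mul_of_nonneg_right (by linarith) (dischargeWeight_nonneg hkℓ hvk'.le)
    _ = ∑ u ∈ G.heavyNeighborFinset Δ v, G.transfer k ℓ Δ u v := by
        rw [sum_congr rfl fun u hu => ?_, sum_const, nsmul_eq_mul]
        simp only [heavyNeighborFinset, mem_filter, mem_neighborFinset] at hu
        simp [transfer, hu.1.symm, hu.2, hvk]
    _ ≤ ∑ u, G.transfer k ℓ Δ u v :=
        sum_le_sum_of_subset_of_nonneg (subset_univ _) fun u _ _ => transfer_nonneg hkℓ u v

include hbound

theorem sum_transfer_eq_zero_of_degree_lt {v : V} (hv : 0 < G.degree v) (hvk : G.degree v < k)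
    (hnr : ¬G.IsReducible Δ ℓ v) : ∑ u, G.transfer k ℓ Δ v u = 0 := by
  refine sum_eq_zero fun u _ => if_neg ?_
  rintro ⟨-, hheavy, hu⟩
  have := le_two_mul_degree_of_not_isReducible hkℓ hv hvk hnr
  have := two_mul_le_add_two_of_bound hbound hkℓ (by omega)
  omega

theorem sum_transfer_le_of_le_degree (hnr : ∀ u, ¬G.IsReducible Δ ℓ u) {v : V}
    (hv : 0 < G.degree v) (hkv : k ≤ G.degree v) :
    ∑ u, G.transfer k ℓ Δ v u ≤ G.degree v - k := by
  have hpos : (0 : ℝ) < G.degree v := by exact_mod_cast hv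
  have hkv' : (k : ℝ) ≤ G.degree v := by exact_mod_cast hkv
  calc ∑ u, G.transfer k ℓ Δ v u
      ≤ ∑ u, if G.Adj v u then ((G.degree v : ℝ) - k) / G.degree v else 0 :=
        sum_le_sum fun u _ => by
          unfold transfer
          split_ifs with h hadj hadj
          · obtain ⟨hadj, hheavy, huk⟩ := h
            have hu := le_two_mul_degree_of_not_isReducible hkℓ hadj.degree_pos_right huk (hnr u)
            rw [le_div_iff₀ hpos, mul_comm]
            exact mul_dischargeWeight_le hbound hkℓ (by exact_mod_cast hu)
              (by exact_mod_cast hheavy) (by exact_mod_cast huk)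
          · exact absurd h.1 hadj
          · exact div_nonneg (sub_nonneg.2 hkv') hpos.le
          · rfl
    _ = G.degree v - k := by
        rw [← sum_filter, sum_const, ← neighborFinset_eq_filter, card_neighborFinset_eq_degree,
          nsmul_eq_mul, mul_div_cancel₀ _ hpos.ne']

theorem exists_isReducible (hmad : MadLT G k) (hG : ∃ v, 0 < G.degree v) :
    ∃ z, G.IsReducible Δ ℓ z := by
  by_contra! hnr
  have hcharge : ∀ v ∈ ({v | 0 < G.degree v} : Finset V),
      0 ≤ (G.degree v - k : ℝ) +
        (∑ u, G.transfer k ℓ Δ u v - ∑ u, G.transfer k ℓ Δ v u) := by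
    intro v hv
    replace hv : 0 < G.degree v := by simpa using hv
    rcases lt_or_ge (G.degree v) k with hvk | hkv
    · rw [sum_transfer_eq_zero_of_degree_lt hkℓ hbound hv hvk (hnr v)]
      linarith [sub_le_sum_transfer hkℓ hv hvk (hnr v)]
    · simp only [transfer_eq_zero_of_le_degree hkv, sum_const_zero]
      linarith [sum_transfer_le_of_le_degree hkℓ hbound hnr hv hkv]
  have htotal := sum_nonneg hcharge
  rw [sum_add_distrib, sum_inflow_sub_outflow_eq_zero _ fun u v => adj_of_transfer_ne_zero,
    add_zero, sum_sub_distrib, sum_const, nsmul_eq_mul,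
    sum_filter_of_ne fun v _ hv => by simpa [pos_iff_ne_zero] using hv] at htotal
  linarith [hmad.sum_degree_lt hG]

end discharging

theorem hasIncidenceColoring_of_madLT {V : Type*} [Fintype V] (G : SimpleGraph V)
    [DecidableRel G.Adj] {k ℓ Δ : ℕ} (hkℓ : k ≤ ℓ + 1) (hΔℓ : 0 < Δ + ℓ)
    (hbound : (k : ℝ) * (3 * (ℓ + 2 - k) + k) ≤ 2 * (ℓ + 2 - k) * (Δ + 2))
    (hΔ : ∀ v, G.degree v ≤ Δ) (hmad : MadLT G k) :
    HasIncidenceColoring G (Δ + ℓ) ℓ := by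
  classical
  suffices ∀ H ≤ G, HasIncidenceColoring H (Δ + ℓ) ℓ from this G le_rfl
  intro H
  induction H using WellFoundedLT.induction with
  | ind H ih =>
  intro hHG
  have hΔH (v : V) : H.degree v ≤ Δ := (degree_le_of_le hHG).trans (hΔ v)
  by_cases hH : ∃ v, 0 < H.degree v
  · obtain ⟨z, hz⟩ := exists_isReducible hkℓ hbound (hmad.mono hHG) hH
    obtain ⟨u, hzu⟩ := (H.degree_pos_iff_exists_adj z).1 hz.1
    have hlt : H.deleteIncidenceSet z < H := (H.deleteIncidenceSet_le z).lt_of_not_ge fun hle =>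
      (deleteIncidenceSet_adj.1 (hle hzu)).2.1 rfl
    exact .of_deleteIncidenceSet hΔH hz (ih _ hlt ((H.deleteIncidenceSet_le z).trans hHG))
  · push Not at hH
    have hadj (u v : V) : ¬H.Adj u v := fun h => (hH u).not_gt h.degree_pos_left
    exact ⟨fun _ _ => ⟨0, hΔℓ⟩, fun v u _ _ hvu => absurd hvu (hadj v u),
      fun v => by simp [hadj]⟩

end SimpleGraph

theorem discharging_bound_of_alpha {k α L Δ : ℝ} (hk : 0 < k) (hα : 0 < α)
    (hL : (1 + α) * k < L + 1) (hΔ : (3 * α + 1) / (2 * α) * k - 2 ≤ Δ) :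
    k * (3 * (L + 1 - k) + k) < 2 * (L + 1 - k) * (Δ + 2) := by
  rw [div_mul_eq_mul_div, sub_le_iff_le_add, div_le_iff₀ (by positivity)] at hΔ
  have hτ : α * k < L + 1 - k := by linarith
  have : α * (k * (3 * (L + 1 - k) + k)) < α * (2 * (L + 1 - k) * (Δ + 2)) := by
    nlinarith [mul_lt_mul_of_pos_left hτ hk,
      mul_le_mul_of_nonneg_left hΔ (by nlinarith : (0 : ℝ) ≤ L + 1 - k)]
  exact lt_of_mul_lt_mul_left this hα.le

theorem incidence_coloring_mad_lt_k_alpha {V : Type*} [Fintype V] (G : SimpleGraph V)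
    [DecidableRel G.Adj] (k : ℕ) (hk : 0 < k) (α : ℝ) (hα : 0 < α)
    (hmad : MadLT G (k : ℝ))
    (hΔ : ((G.maxDegree : ℝ)) ≥ ((3 * α + 1) / (2 * α)) * (k : ℝ) - 2) :
    HasIncidenceColoring G (G.maxDegree + ⌊(1 + α) * (k : ℝ)⌋₊ - 1)
      (⌊(1 + α) * (k : ℝ)⌋₊ - 1) := by
  have hk' : (0 : ℝ) < k := by exact_mod_cast hk
  have hkL : k ≤ ⌊(1 + α) * (k : ℝ)⌋₊ := Nat.le_floor (by nlinarith)
  obtain ⟨ℓ, hℓ⟩ : ∃ ℓ, ⌊(1 + α) * (k : ℝ)⌋₊ = ℓ + 1 :=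
    ⟨_, (Nat.sub_add_cancel (hk.trans_le hkL)).symm⟩
  have hbound := discharging_bound_of_alpha hk' hα (hℓ ▸ Nat.lt_floor_add_one _) hΔ
  push_cast at hbound
  rw [hℓ, Nat.add_sub_cancel, ← Nat.add_assoc, Nat.add_sub_cancel]
  have hpos : 0 < G.maxDegree + ℓ := by
    -- otherwise `k = 1` and the strict bound reads `4 < 4`
    by_contra h0
    obtain ⟨hΔ0, rfl⟩ : G.maxDegree = 0 ∧ ℓ = 0 := by omega
    obtain rfl : k = 1 := by omega
    norm_num [hΔ0] at hbound
  exact G.hasIncidenceColoring_of_madLT (by omega) hpos (by linarith) G.degree_le_maxDegree hmad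
end

section
/- Let k ≥ 7 be an integer and let G be a finite simple graph with Δ(G) ≤ k. Suppose G contains a vertex v of degree 3 with neighbors u₁, u₂, u₃ such that deg(u₁) ≤ Δ(G) − 2 and deg(u₂) ≤ Δ(G) − 1. If G − vu₁ admits an incidence (k+3, 3)-coloring, then G admits an incidence (k+3, 3)-coloring. -/
open SimpleGraph

section Master

variable {V : Type*} [Fintype V] (G : SimpleGraph V)
variable (v u₁ u₂ u₃ : V) {n : ℕ} (φ : V → V → Fin n)
variable (c₁ c₂ af pf bf qf : Fin n)

/-- The updated coloring: recolors the six incidences on the edges `vu₁`, `vu₂`, `vu₃`. -/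
noncomputable def updφ : V → V → Fin n := fun x y =>
  letI := Classical.decEq V
  if x = v then (if y = u₁ then c₂ else if y = u₂ then af else if y = u₃ then bf else φ x y)
  else if y = v then (if x = u₁ then c₁ else if x = u₂ then pf else if x = u₃ then qf else φ x y)
  else φ x y

theorem master
    (h1 : G.Adj v u₁) (h2 : G.Adj v u₂) (h3 : G.Adj v u₃)
    (h12 : u₁ ≠ u₂) (h13 : u₁ ≠ u₃) (h23 : u₂ ≠ u₃)
    (hnv : ∀ z, G.Adj v z → z = u₁ ∨ z = u₂ ∨ z = u₃)
    (hφ : IsIncidenceColoring (G.deleteEdges {s(v, u₁)}) φ)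
    (hℓ : ∀ w : V, ({c : Fin n | ∃ u : V, (G.deleteEdges {s(v, u₁)}).Adj u w ∧ φ u w = c}).ncard ≤ 3)
    (H3 : c₁ ≠ af) (H4 : c₁ ≠ bf) (H5 : c₁ ≠ c₂)
    (H7 : c₂ ≠ af) (H8 : c₂ ≠ bf) (H9 : c₂ ≠ pf) (H10 : c₂ ≠ qf)
    (H13 : af ≠ pf) (H14 : af ≠ bf) (H15 : af ≠ qf)
    (H18 : bf ≠ qf) (H19 : bf ≠ pf)
    (H1 : ∀ x, (G.deleteEdges {s(v, u₁)}).Adj x u₁ → c₁ ≠ φ x u₁)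
    (H2 : ∀ y, (G.deleteEdges {s(v, u₁)}).Adj u₁ y → c₁ ≠ φ u₁ y)
    (H6 : ∀ y, (G.deleteEdges {s(v, u₁)}).Adj u₁ y → c₂ ≠ φ u₁ y)
    (H12 : ∀ y, (G.deleteEdges {s(v, u₁)}).Adj u₂ y → y ≠ v → af ≠ φ u₂ y)
    (H17 : ∀ y, (G.deleteEdges {s(v, u₁)}).Adj u₃ y → y ≠ v → bf ≠ φ u₃ y)
    (H21 : ∀ y, (G.deleteEdges {s(v, u₁)}).Adj u₂ y → y ≠ v → pf ≠ φ u₂ y)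
    (H22 : ∀ x, (G.deleteEdges {s(v, u₁)}).Adj x u₂ → x ≠ v → pf ≠ φ x u₂)
    (H23 : ∀ y, (G.deleteEdges {s(v, u₁)}).Adj u₃ y → y ≠ v → qf ≠ φ u₃ y)
    (H24 : ∀ x, (G.deleteEdges {s(v, u₁)}).Adj x u₃ → x ≠ v → qf ≠ φ x u₃)
    (L1 : ({c : Fin n | ∃ x, (G.deleteEdges {s(v, u₁)}).Adj x u₁ ∧ φ x u₁ = c} ∪ {c₂}).ncard ≤ 3)
    (L2 : ({c : Fin n | ∃ x, (G.deleteEdges {s(v, u₁)}).Adj x u₂ ∧ x ≠ v ∧ φ x u₂ = c} ∪ {af}).ncard ≤ 3)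
    (L3 : ({c : Fin n | ∃ x, (G.deleteEdges {s(v, u₁)}).Adj x u₃ ∧ x ≠ v ∧ φ x u₃ = c} ∪ {bf}).ncard ≤ 3) :
    HasIncidenceColoring G n 3 := by
  classical
  set G' := G.deleteEdges {s(v, u₁)} with hG'
  set ψ := updφ v u₁ u₂ u₃ φ c₁ c₂ af pf bf qf with hψ
  have hvu1 : v ≠ u₁ := h1.ne
  have hvu2 : v ≠ u₂ := h2.ne
  have hvu3 : v ≠ u₃ := h3.ne
  -- evaluation lemmas
  have ev1 : ψ v u₁ = c₂ := by simp [hψ, updφ]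
  have ev2 : ψ u₁ v = c₁ := by simp [hψ, updφ, hvu1.symm]
  have ev3 : ψ v u₂ = af := by simp [hψ, updφ, h12.symm]
  have ev4 : ψ u₂ v = pf := by simp [hψ, updφ, hvu2.symm, h12.symm]
  have ev5 : ψ v u₃ = bf := by simp [hψ, updφ, h13.symm, h23.symm]
  have ev6 : ψ u₃ v = qf := by simp [hψ, updφ, hvu3.symm, h13.symm, h23.symm]
  have ev0 : ∀ x y, x ≠ v → y ≠ v → ψ x y = φ x y := by
    intro x y hx hy; simp [hψ, updφ, hx, hy]
  have evv : ∀ y, y ≠ u₁ → y ≠ u₂ → y ≠ u₃ → ψ v y = φ v y := by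
    intro y hy1 hy2 hy3; simp [hψ, updφ, hy1, hy2, hy3]
  -- G' adjacency transfer
  have hGG' : ∀ {x y : V}, G.Adj x y → ¬(x = v ∧ y = u₁) → ¬(x = u₁ ∧ y = v) → G'.Adj x y := by
    intro x y hxy hA hB
    rw [hG', deleteEdges_adj]
    refine ⟨hxy, ?_⟩
    simp only [Set.mem_singleton_iff, Sym2.eq_iff]
    tauto
  have hG'G : ∀ {x y : V}, G'.Adj x y → G.Adj x y := by
    intro x y hxy; rw [hG', deleteEdges_adj] at hxy; exact hxy.1

  -- normalization of the adjacency disjunction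
  have norm : ∀ (x y w z : V), ((x = w ∨ s(x,y) = s(w,z) ∨ s(x,w) = s(x,y) ∨ s(x,w) = s(w,z)) ∨
      (w = x ∨ s(w,z) = s(x,y) ∨ s(w,x) = s(w,z) ∨ s(w,x) = s(x,y))) →
      (x = w ∨ s(x,y) = s(w,z) ∨ s(x,w) = s(x,y) ∨ s(x,w) = s(w,z)) := by
    intro x y w z h
    rcases h with h | h
    · exact h
    rcases h with h | h | h | h
    exacts [Or.inl h.symm, Or.inr (Or.inl h.symm),
      Or.inr (Or.inr (Or.inr (Sym2.eq_swap.trans h))),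
      Or.inr (Or.inr (Or.inl (Sym2.eq_swap.trans h)))]
  -- the six "modified incidence" lemmas
  have Mc₂ : ∀ w z, G.Adj w z → (w, z) ≠ (v, u₁) →
      (v = w ∨ s(v,u₁) = s(w,z) ∨ s(v,w) = s(v,u₁) ∨ s(v,w) = s(w,z)) → c₂ ≠ ψ w z := by
    intro w z hwz hne hD
    rcases hD with h | h | h | h
    · rcases h with rfl
      rcases hnv z hwz with rfl | rfl | rfl
      · exact absurd rfl hne
      · rw [ev3]; exact H7
      · rw [ev5]; exact H8
    · rw [Sym2.eq_iff] at h
      rcases h with ⟨rfl, rfl⟩ | ⟨rfl, rfl⟩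
      · exact absurd rfl hne
      · rw [ev2]; exact Ne.symm H5
    · rw [Sym2.eq_iff] at h
      rcases h with ⟨-, rfl⟩ | ⟨h1, rfl⟩
      · by_cases hz : z = v
        · subst hz; rw [ev2]; exact Ne.symm H5
        · rw [ev0 _ _ (Ne.symm hvu1) hz]
          exact H6 z (hGG' hwz (fun hh => hvu1 hh.1.symm) (fun hh => hz hh.2))
      · exact absurd h1 hvu1
    · rw [Sym2.eq_iff] at h
      rcases h with ⟨rfl, rfl⟩ | ⟨rfl, -⟩
      · exact absurd hwz (G.irrefl)
      · rcases hnv w hwz.symm with rfl | rfl | rfl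
        · rw [ev2]; exact Ne.symm H5
        · rw [ev4]; exact H9
        · rw [ev6]; exact H10
  have Mc₁ : ∀ w z, G.Adj w z → (w, z) ≠ (u₁, v) →
      (u₁ = w ∨ s(u₁,v) = s(w,z) ∨ s(u₁,w) = s(u₁,v) ∨ s(u₁,w) = s(w,z)) → c₁ ≠ ψ w z := by
    intro w z hwz hne hD
    rcases hD with h | h | h | h
    · rcases h with rfl
      by_cases hz : z = v
      · subst hz; exact absurd rfl hne
      · rw [ev0 _ _ (Ne.symm hvu1) hz]
        exact H2 z (hGG' hwz (fun hh => hvu1 hh.1.symm) (fun hh => hz hh.2))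
    · rw [Sym2.eq_iff] at h
      rcases h with ⟨rfl, rfl⟩ | ⟨rfl, rfl⟩
      · exact absurd rfl hne
      · rw [ev1]; exact H5
    · rw [Sym2.eq_iff] at h
      rcases h with ⟨-, rfl⟩ | ⟨h1, rfl⟩
      · rcases hnv z hwz with rfl | rfl | rfl
        · rw [ev1]; exact H5
        · rw [ev3]; exact H3
        · rw [ev5]; exact H4
      · exact absurd h1.symm hvu1
    · rw [Sym2.eq_iff] at h
      rcases h with ⟨rfl, rfl⟩ | ⟨rfl, -⟩
      · exact absurd hwz (G.irrefl)
      · by_cases hw : w = v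
        · subst hw; rw [ev1]; exact H5
        · rw [ev0 _ _ hw (Ne.symm hvu1)]
          exact H1 w (hGG' hwz (fun hh => hw hh.1) (fun hh => hvu1 hh.2.symm))
  have Maf : ∀ w z, G.Adj w z → (w, z) ≠ (v, u₂) →
      (v = w ∨ s(v,u₂) = s(w,z) ∨ s(v,w) = s(v,u₂) ∨ s(v,w) = s(w,z)) → af ≠ ψ w z := by
    intro w z hwz hne hD
    rcases hD with h | h | h | h
    · rcases h with rfl
      rcases hnv z hwz with rfl | rfl | rfl
      · rw [ev1]; exact Ne.symm H7
      · exact absurd rfl hne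
      · rw [ev5]; exact H14
    · rw [Sym2.eq_iff] at h
      rcases h with ⟨rfl, rfl⟩ | ⟨rfl, rfl⟩
      · exact absurd rfl hne
      · rw [ev4]; exact H13
    · rw [Sym2.eq_iff] at h
      rcases h with ⟨-, rfl⟩ | ⟨h1, rfl⟩
      · by_cases hz : z = v
        · subst hz; rw [ev4]; exact H13
        · rw [ev0 _ _ (Ne.symm hvu2) hz]
          exact H12 z (hGG' hwz (fun hh => hvu2 hh.1.symm) (fun hh => h12 hh.1.symm)) hz
      · exact absurd h1 hvu2
    · rw [Sym2.eq_iff] at h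
      rcases h with ⟨rfl, rfl⟩ | ⟨rfl, -⟩
      · exact absurd hwz (G.irrefl)
      · rcases hnv w hwz.symm with rfl | rfl | rfl
        · rw [ev2]; exact Ne.symm H3
        · rw [ev4]; exact H13
        · rw [ev6]; exact H15
  have Mpf : ∀ w z, G.Adj w z → (w, z) ≠ (u₂, v) →
      (u₂ = w ∨ s(u₂,v) = s(w,z) ∨ s(u₂,w) = s(u₂,v) ∨ s(u₂,w) = s(w,z)) → pf ≠ ψ w z := by
    intro w z hwz hne hD
    rcases hD with h | h | h | h
    · rcases h with rfl
      by_cases hz : z = v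
      · subst hz; exact absurd rfl hne
      · rw [ev0 _ _ (Ne.symm hvu2) hz]
        exact H21 z (hGG' hwz (fun hh => hvu2 hh.1.symm) (fun hh => h12 hh.1.symm)) hz
    · rw [Sym2.eq_iff] at h
      rcases h with ⟨rfl, rfl⟩ | ⟨rfl, rfl⟩
      · exact absurd rfl hne
      · rw [ev3]; exact Ne.symm H13
    · rw [Sym2.eq_iff] at h
      rcases h with ⟨-, rfl⟩ | ⟨h1, rfl⟩
      · rcases hnv z hwz with rfl | rfl | rfl
        · rw [ev1]; exact Ne.symm H9
        · rw [ev3]; exact Ne.symm H13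
        · rw [ev5]; exact Ne.symm H19
      · exact absurd h1.symm hvu2
    · rw [Sym2.eq_iff] at h
      rcases h with ⟨rfl, rfl⟩ | ⟨rfl, -⟩
      · exact absurd hwz (G.irrefl)
      · by_cases hw : w = v
        · subst hw; rw [ev3]; exact Ne.symm H13
        · rw [ev0 _ _ hw (Ne.symm hvu2)]
          exact H22 w (hGG' hwz (fun hh => hw hh.1) (fun hh => hvu2 hh.2.symm)) hw
  have Mbf : ∀ w z, G.Adj w z → (w, z) ≠ (v, u₃) →
      (v = w ∨ s(v,u₃) = s(w,z) ∨ s(v,w) = s(v,u₃) ∨ s(v,w) = s(w,z)) → bf ≠ ψ w z := by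
    intro w z hwz hne hD
    rcases hD with h | h | h | h
    · rcases h with rfl
      rcases hnv z hwz with rfl | rfl | rfl
      · rw [ev1]; exact Ne.symm H8
      · rw [ev3]; exact Ne.symm H14
      · exact absurd rfl hne
    · rw [Sym2.eq_iff] at h
      rcases h with ⟨rfl, rfl⟩ | ⟨rfl, rfl⟩
      · exact absurd rfl hne
      · rw [ev6]; exact H18
    · rw [Sym2.eq_iff] at h
      rcases h with ⟨-, rfl⟩ | ⟨h1, rfl⟩
      · by_cases hz : z = v
        · subst hz; rw [ev6]; exact H18
        · rw [ev0 _ _ (Ne.symm hvu3) hz]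
          exact H17 z (hGG' hwz (fun hh => hvu3 hh.1.symm) (fun hh => h13 hh.1.symm)) hz
      · exact absurd h1 hvu3
    · rw [Sym2.eq_iff] at h
      rcases h with ⟨rfl, rfl⟩ | ⟨rfl, -⟩
      · exact absurd hwz (G.irrefl)
      · rcases hnv w hwz.symm with rfl | rfl | rfl
        · rw [ev2]; exact Ne.symm H4
        · rw [ev4]; exact H19
        · rw [ev6]; exact H18
  have Mqf : ∀ w z, G.Adj w z → (w, z) ≠ (u₃, v) →
      (u₃ = w ∨ s(u₃,v) = s(w,z) ∨ s(u₃,w) = s(u₃,v) ∨ s(u₃,w) = s(w,z)) → qf ≠ ψ w z := by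
    intro w z hwz hne hD
    rcases hD with h | h | h | h
    · rcases h with rfl
      by_cases hz : z = v
      · subst hz; exact absurd rfl hne
      · rw [ev0 _ _ (Ne.symm hvu3) hz]
        exact H23 z (hGG' hwz (fun hh => hvu3 hh.1.symm) (fun hh => h13 hh.1.symm)) hz
    · rw [Sym2.eq_iff] at h
      rcases h with ⟨rfl, rfl⟩ | ⟨rfl, rfl⟩
      · exact absurd rfl hne
      · rw [ev5]; exact Ne.symm H18
    · rw [Sym2.eq_iff] at h
      rcases h with ⟨-, rfl⟩ | ⟨h1, rfl⟩
      · rcases hnv z hwz with rfl | rfl | rfl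
        · rw [ev1]; exact Ne.symm H10
        · rw [ev3]; exact Ne.symm H15
        · rw [ev5]; exact Ne.symm H18
      · exact absurd h1.symm hvu3
    · rw [Sym2.eq_iff] at h
      rcases h with ⟨rfl, rfl⟩ | ⟨rfl, -⟩
      · exact absurd hwz (G.irrefl)
      · by_cases hw : w = v
        · subst hw; rw [ev5]; exact Ne.symm H18
        · rw [ev0 _ _ hw (Ne.symm hvu3)]
          exact H24 w (hGG' hwz (fun hh => hw hh.1) (fun hh => hvu3 hh.2.symm)) hw
  -- properness
  have prop : IsIncidenceColoring G ψ := by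
    intro x y w z hxy hwz hne hD
    by_cases hx : x = v
    · subst hx
      rcases hnv y hxy with rfl | rfl | rfl
      · rw [ev1]; exact Mc₂ w z hwz (Ne.symm hne) (norm _ _ _ _ (Or.inl hD))
      · rw [ev3]; exact Maf w z hwz (Ne.symm hne) (norm _ _ _ _ (Or.inl hD))
      · rw [ev5]; exact Mbf w z hwz (Ne.symm hne) (norm _ _ _ _ (Or.inl hD))
    · by_cases hy : y = v
      · subst hy
        rcases hnv x hxy.symm with rfl | rfl | rfl
        · rw [ev2]; exact Mc₁ w z hwz (Ne.symm hne) (norm _ _ _ _ (Or.inl hD))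
        · rw [ev4]; exact Mpf w z hwz (Ne.symm hne) (norm _ _ _ _ (Or.inl hD))
        · rw [ev6]; exact Mqf w z hwz (Ne.symm hne) (norm _ _ _ _ (Or.inl hD))
      · by_cases hw : w = v
        · subst hw
          rcases hnv z hwz with rfl | rfl | rfl
          · rw [ev1]; exact (Mc₂ x y hxy hne (norm _ _ _ _ (Or.inr hD))).symm
          · rw [ev3]; exact (Maf x y hxy hne (norm _ _ _ _ (Or.inr hD))).symm
          · rw [ev5]; exact (Mbf x y hxy hne (norm _ _ _ _ (Or.inr hD))).symm
        · by_cases hz : z = v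
          · subst hz
            rcases hnv w hwz.symm with rfl | rfl | rfl
            · rw [ev2]; exact (Mc₁ x y hxy hne (norm _ _ _ _ (Or.inr hD))).symm
            · rw [ev4]; exact (Mpf x y hxy hne (norm _ _ _ _ (Or.inr hD))).symm
            · rw [ev6]; exact (Mqf x y hxy hne (norm _ _ _ _ (Or.inr hD))).symm
          · rw [ev0 x y hx hy, ev0 w z hw hz]
            exact hφ (hGG' hxy (fun hh => hx hh.1) (fun hh => hy hh.2))
              (hGG' hwz (fun hh => hw hh.1) (fun hh => hz hh.2)) hne hD
  -- the ℓ-conditions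
  have hbound : ∀ t : V, ({c : Fin n | ∃ u : V, G.Adj u t ∧ ψ u t = c}).ncard ≤ 3 := by
    intro t
    by_cases ht1 : t = u₁
    · rw [ht1]
      refine le_trans (Set.ncard_le_ncard ?_ (Set.toFinite _)) L1
      rintro c ⟨x, hx, rfl⟩
      by_cases hxv : x = v
      · subst hxv; right; rw [ev1]; rfl
      · exact Or.inl ⟨x, hGG' hx (fun hh => hxv hh.1) (fun hh => hvu1 hh.2.symm),
          (ev0 x u₁ hxv (Ne.symm hvu1)).symm⟩
    · by_cases ht2 : t = u₂
      · rw [ht2]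
        refine le_trans (Set.ncard_le_ncard ?_ (Set.toFinite _)) L2
        rintro c ⟨x, hx, rfl⟩
        by_cases hxv : x = v
        · subst hxv; right; rw [ev3]; rfl
        · exact Or.inl ⟨x, hGG' hx (fun hh => hxv hh.1) (fun hh => hvu2 hh.2.symm), hxv,
            (ev0 x u₂ hxv (Ne.symm hvu2)).symm⟩
      · by_cases ht3 : t = u₃
        · rw [ht3]
          refine le_trans (Set.ncard_le_ncard ?_ (Set.toFinite _)) L3
          rintro c ⟨x, hx, rfl⟩
          by_cases hxv : x = v
          · subst hxv; right; rw [ev5]; rfl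
          · exact Or.inl ⟨x, hGG' hx (fun hh => hxv hh.1) (fun hh => hvu3 hh.2.symm), hxv,
              (ev0 x u₃ hxv (Ne.symm hvu3)).symm⟩
        · by_cases htv : t = v
          · rw [htv]
            have hsub : {c : Fin n | ∃ u : V, G.Adj u v ∧ ψ u v = c} ⊆ {c₁, pf, qf} := by
              rintro c ⟨x, hx, rfl⟩
              rcases hnv x hx.symm with rfl | rfl | rfl
              · rw [ev2]; exact Or.inl rfl
              · rw [ev4]; exact Or.inr (Or.inl rfl)
              · rw [ev6]; exact Or.inr (Or.inr rfl)
            refine le_trans (Set.ncard_le_ncard hsub (Set.toFinite _)) ?_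
            have i1 := Set.ncard_insert_le c₁ ({pf, qf} : Set (Fin n))
            have i2 := Set.ncard_insert_le pf ({qf} : Set (Fin n))
            have i3 := Set.ncard_singleton qf
            omega
          · refine le_trans (Set.ncard_le_ncard ?_ (Set.toFinite _)) (hℓ t)
            rintro c ⟨x, hx, rfl⟩
            have hxv : x ≠ v := by
              rintro rfl
              rcases hnv t hx with rfl | rfl | rfl
              exacts [ht1 rfl, ht2 rfl, ht3 rfl]
            exact ⟨x, hGG' hx (fun hh => hxv hh.1) (fun hh => htv hh.2),
              (ev0 x t hxv htv).symm⟩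
  exact ⟨ψ, prop, hbound⟩

end Master

set_option maxHeartbeats 100000000 in
theorem incidence_extend_three_vertex {V : Type*} [Fintype V] (G : SimpleGraph V)
    [DecidableRel G.Adj] (k : ℕ) (hk : 7 ≤ k) (hΔ : G.maxDegree ≤ k)
    (v u₁ u₂ u₃ : V) (h1 : G.Adj v u₁) (h2 : G.Adj v u₂) (h3 : G.Adj v u₃)
    (h12 : u₁ ≠ u₂) (h13 : u₁ ≠ u₃) (h23 : u₂ ≠ u₃)
    (hdv : G.degree v = 3)
    (hd1 : G.degree u₁ ≤ G.maxDegree - 2) (hd2 : G.degree u₂ ≤ G.maxDegree - 1)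
    (hcol : HasIncidenceColoring (G.deleteEdges {s(v, u₁)}) (k + 3) 3) :
    HasIncidenceColoring G (k + 3) 3 := by
  classical
  obtain ⟨φ, hφ, hℓ⟩ := hcol
  set G' := G.deleteEdges {s(v, u₁)} with hG'def
  have hvu1 : v ≠ u₁ := h1.ne
  have hvu2 : v ≠ u₂ := h2.ne
  have hvu3 : v ≠ u₃ := h3.ne
  have hGG' : ∀ {x y : V}, G.Adj x y → ¬(x = v ∧ y = u₁) → ¬(x = u₁ ∧ y = v) → G'.Adj x y := by
    intro x y hxy hA hB
    rw [hG'def, deleteEdges_adj]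
    refine ⟨hxy, ?_⟩
    simp only [Set.mem_singleton_iff, Sym2.eq_iff]
    tauto
  have hG'G : ∀ {x y : V}, G'.Adj x y → G.Adj x y := by
    intro x y hxy; rw [hG'def, deleteEdges_adj] at hxy; exact hxy.1
  have g2 : G'.Adj v u₂ := hGG' h2 (fun hh => h12 hh.2.symm) (fun hh => hvu1 hh.1)
  have g3 : G'.Adj v u₃ := hGG' h3 (fun hh => h13 hh.2.symm) (fun hh => hvu1 hh.1)
  -- neighbors of v are exactly u₁, u₂, u₃
  have hnv : ∀ z, G.Adj v z → z = u₁ ∨ z = u₂ ∨ z = u₃ := by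
    intro z hz
    have hsub : ({u₁, u₂, u₃} : Finset V) ⊆ G.neighborFinset v := by
      intro w hw; simp only [Finset.mem_insert, Finset.mem_singleton] at hw
      rcases hw with rfl | rfl | rfl <;> simp [mem_neighborFinset, h1, h2, h3]
    have hc3 : ({u₁, u₂, u₃} : Finset V).card = 3 := by
      rw [Finset.card_insert_of_notMem (by simp [h12, h13]),
        Finset.card_insert_of_notMem (by simp [h23]), Finset.card_singleton]
    have hcard : (G.neighborFinset v).card ≤ ({u₁, u₂, u₃} : Finset V).card := by
      rw [card_neighborFinset_eq_degree, hdv, hc3]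
    have heq := Finset.eq_of_subset_of_card_le hsub hcard
    have hz' : z ∈ G.neighborFinset v := by simp [mem_neighborFinset, hz]
    rw [← heq] at hz'
    simpa using hz'
  -- the colors and color sets of the old coloring
  set a := φ v u₂ with ha
  set b := φ v u₃ with hb
  set p := φ u₂ v with hp
  set q := φ u₃ v with hq
  set A : Set (Fin (k+3)) := {c | ∃ x, G'.Adj x u₁ ∧ φ x u₁ = c} with hA
  set B : Set (Fin (k+3)) := {c | ∃ y, G'.Adj u₁ y ∧ φ u₁ y = c} with hB
  set O₂ : Set (Fin (k+3)) := {c | ∃ y, G'.Adj u₂ y ∧ y ≠ v ∧ φ u₂ y = c} with hO₂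
  set I₂ : Set (Fin (k+3)) := {c | ∃ x, G'.Adj x u₂ ∧ x ≠ v ∧ φ x u₂ = c} with hI₂
  set O₃ : Set (Fin (k+3)) := {c | ∃ y, G'.Adj u₃ y ∧ y ≠ v ∧ φ u₃ y = c} with hO₃
  set I₃ : Set (Fin (k+3)) := {c | ∃ x, G'.Adj x u₃ ∧ x ≠ v ∧ φ x u₃ = c} with hI₃
  -- pairwise distinctness facts from properness of φ on G'
  have fab : a ≠ b := hφ g2 g3 (by simp [h23]) (Or.inl rfl)
  have fap : a ≠ p := hφ g2 g2.symm (by simp [hvu2]) (Or.inr (Or.inl Sym2.eq_swap))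
  have faq : a ≠ q := hφ g2 g3.symm (by simp [hvu3]) (Or.inr (Or.inr (Or.inr Sym2.eq_swap)))
  have fbp : b ≠ p := hφ g3 g2.symm (by simp [hvu2]) (Or.inr (Or.inr (Or.inr Sym2.eq_swap)))
  have fbq : b ≠ q := hφ g3 g3.symm (by simp [hvu3]) (Or.inr (Or.inl Sym2.eq_swap))
  have fAB : ∀ {s t : Fin (k+3)}, s ∈ A → t ∈ B → s ≠ t := by
    rintro s t ⟨x, hx, rfl⟩ ⟨y, hy, rfl⟩
    exact hφ hx hy (by simp [hx.ne]) (Or.inr (Or.inr (Or.inl rfl)))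
  have faO₂ : a ∉ O₂ := by
    rintro ⟨y, hy, hyv, hc⟩
    exact hφ g2 hy (by simp [hvu2]) (Or.inr (Or.inr (Or.inl rfl))) hc.symm
  have fbO₃ : b ∉ O₃ := by
    rintro ⟨y, hy, hyv, hc⟩
    exact hφ g3 hy (by simp [hvu3]) (Or.inr (Or.inr (Or.inl rfl))) hc.symm
  have fpO₂ : p ∉ O₂ := by
    rintro ⟨y, hy, hyv, hc⟩
    exact hφ g2.symm hy (by simp [Ne.symm hyv]) (Or.inl rfl) hc.symm
  have fqO₃ : q ∉ O₃ := by
    rintro ⟨y, hy, hyv, hc⟩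
    exact hφ g3.symm hy (by simp [Ne.symm hyv]) (Or.inl rfl) hc.symm
  have fpI₂ : p ∉ I₂ := by
    rintro ⟨x, hx, hxv, hc⟩
    exact hφ g2.symm hx (by simp [hx.ne']) (Or.inr (Or.inr (Or.inr Sym2.eq_swap))) hc.symm
  have fqI₃ : q ∉ I₃ := by
    rintro ⟨x, hx, hxv, hc⟩
    exact hφ g3.symm hx (by simp [hx.ne']) (Or.inr (Or.inr (Or.inr Sym2.eq_swap))) hc.symm
  have fO₂I₂ : ∀ {s t : Fin (k+3)}, s ∈ O₂ → t ∈ I₂ → s ≠ t := by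
    rintro s t ⟨y, hy, hyv, rfl⟩ ⟨x, hx, hxv, rfl⟩
    exact hφ hy hx (by simp [hx.ne']) (Or.inr (Or.inr (Or.inr Sym2.eq_swap)))
  have fO₃I₃ : ∀ {s t : Fin (k+3)}, s ∈ O₃ → t ∈ I₃ → s ≠ t := by
    rintro s t ⟨y, hy, hyv, rfl⟩ ⟨x, hx, hxv, rfl⟩
    exact hφ hy hx (by simp [hx.ne']) (Or.inr (Or.inr (Or.inr Sym2.eq_swap)))
  -- converters: set-nonmembership to quantified form
  have cA : ∀ {c : Fin (k+3)}, c ∉ A → ∀ x, G'.Adj x u₁ → c ≠ φ x u₁ :=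
    fun hc x hx h => hc ⟨x, hx, h.symm⟩
  have cB : ∀ {c : Fin (k+3)}, c ∉ B → ∀ y, G'.Adj u₁ y → c ≠ φ u₁ y :=
    fun hc y hy h => hc ⟨y, hy, h.symm⟩
  have cO₂ : ∀ {c : Fin (k+3)}, c ∉ O₂ → ∀ y, G'.Adj u₂ y → y ≠ v → c ≠ φ u₂ y :=
    fun hc y hy hyv h => hc ⟨y, hy, hyv, h.symm⟩
  have cI₂ : ∀ {c : Fin (k+3)}, c ∉ I₂ → ∀ x, G'.Adj x u₂ → x ≠ v → c ≠ φ x u₂ :=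
    fun hc x hx hxv h => hc ⟨x, hx, hxv, h.symm⟩
  have cO₃ : ∀ {c : Fin (k+3)}, c ∉ O₃ → ∀ y, G'.Adj u₃ y → y ≠ v → c ≠ φ u₃ y :=
    fun hc y hy hyv h => hc ⟨y, hy, hyv, h.symm⟩
  have cI₃ : ∀ {c : Fin (k+3)}, c ∉ I₃ → ∀ x, G'.Adj x u₃ → x ≠ v → c ≠ φ x u₃ :=
    fun hc x hx hxv h => hc ⟨x, hx, hxv, h.symm⟩
  have vA : ∀ {c : Fin (k+3)}, c ∈ A → ∀ y, G'.Adj u₁ y → c ≠ φ u₁ y :=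
    fun hc y hy => fAB hc ⟨y, hy, rfl⟩
  have vI₂O : ∀ {c : Fin (k+3)}, c ∈ I₂ → ∀ y, G'.Adj u₂ y → y ≠ v → c ≠ φ u₂ y :=
    fun hc y hy hyv h => (fO₂I₂ ⟨y, hy, hyv, rfl⟩ hc) h.symm
  have vI₃O : ∀ {c : Fin (k+3)}, c ∈ I₃ → ∀ y, G'.Adj u₃ y → y ≠ v → c ≠ φ u₃ y :=
    fun hc y hy hyv h => (fO₃I₃ ⟨y, hy, hyv, rfl⟩ hc) h.symm
  have vI₂p : ∀ {c : Fin (k+3)}, c ∈ I₂ → p ≠ c := fun hc h => fpI₂ (h ▸ hc)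
  have vI₃q : ∀ {c : Fin (k+3)}, c ∈ I₃ → q ≠ c := fun hc h => fqI₃ (h ▸ hc)
  -- ℓ-facts
  have lA : A.ncard ≤ 3 := hℓ u₁
  have lI₂ : (I₂ ∪ {a}).ncard ≤ 3 := by
    refine le_trans (Set.ncard_le_ncard ?_ (Set.toFinite _)) (hℓ u₂)
    rintro c (⟨x, hx, hxv, rfl⟩ | rfl)
    · exact ⟨x, hx, rfl⟩
    · exact ⟨v, g2, rfl⟩
  have lI₃ : (I₃ ∪ {b}).ncard ≤ 3 := by
    refine le_trans (Set.ncard_le_ncard ?_ (Set.toFinite _)) (hℓ u₃)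
    rintro c (⟨x, hx, hxv, rfl⟩ | rfl)
    · exact ⟨x, hx, rfl⟩
    · exact ⟨v, g3, rfl⟩
  have lI₂o : I₂.ncard ≤ 3 :=
    le_trans (Set.ncard_le_ncard Set.subset_union_left (Set.toFinite _)) lI₂
  have lI₃o : I₃.ncard ≤ 3 :=
    le_trans (Set.ncard_le_ncard Set.subset_union_left (Set.toFinite _)) lI₃
  -- adjacency in G' at u₁, u₂, u₃
  have adjIff₁ : ∀ y, G'.Adj u₁ y ↔ (G.Adj u₁ y ∧ y ≠ v) := by
    intro y
    rw [hG'def, deleteEdges_adj]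
    simp only [Set.mem_singleton_iff, Sym2.eq_iff]
    constructor
    · rintro ⟨h, hns⟩
      refine ⟨h, ?_⟩
      rintro rfl
      exact hns (by tauto)
    · rintro ⟨h, hy⟩
      refine ⟨h, ?_⟩
      rintro (⟨hh, -⟩ | ⟨-, hh⟩)
      · exact hvu1 hh.symm
      · exact hy hh
  have adjIff₂ : ∀ y, G'.Adj u₂ y ↔ G.Adj u₂ y := by
    intro y
    rw [hG'def, deleteEdges_adj]
    simp only [Set.mem_singleton_iff, Sym2.eq_iff]
    constructor
    · exact fun h => h.1
    · intro h
      refine ⟨h, ?_⟩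
      rintro (⟨hh, -⟩ | ⟨hh, -⟩)
      · exact hvu2 hh.symm
      · exact h12 hh.symm
  have adjIff₃ : ∀ y, G'.Adj u₃ y ↔ G.Adj u₃ y := by
    intro y
    rw [hG'def, deleteEdges_adj]
    simp only [Set.mem_singleton_iff, Sym2.eq_iff]
    constructor
    · exact fun h => h.1
    · intro h
      refine ⟨h, ?_⟩
      rintro (⟨hh, -⟩ | ⟨hh, -⟩)
      · exact hvu3 hh.symm
      · exact h13 hh.symm
  have hΔ3 : 3 ≤ G.maxDegree := hdv ▸ G.degree_le_maxDegree v
  -- cardinality bounds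
  have erase_card : ∀ (u : V), G.Adj v u →
      ({y | G.Adj u y ∧ y ≠ v} : Set V).ncard = G.degree u - 1 := by
    intro u hu
    have hset : ({y | G.Adj u y ∧ y ≠ v} : Set V) = ↑((G.neighborFinset u).erase v) := by
      ext y
      simp [Finset.mem_erase, mem_neighborFinset, and_comm]
    rw [hset, Set.ncard_coe_finset, Finset.card_erase_of_mem (by simpa [mem_neighborFinset] using hu.symm),
      card_neighborFinset_eq_degree]
  have cardB : B.ncard ≤ k - 3 := by
    have hsub : B ⊆ (fun y => φ u₁ y) '' {y | G.Adj u₁ y ∧ y ≠ v} := by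
      rintro c ⟨y, hy, rfl⟩
      exact ⟨y, (adjIff₁ y).mp hy, rfl⟩
    have h1' := Set.ncard_le_ncard hsub (Set.toFinite _)
    have h2' := Set.ncard_image_le (s := {y | G.Adj u₁ y ∧ y ≠ v}) (f := fun y => φ u₁ y) (Set.toFinite _)
    rw [erase_card u₁ h1] at h2'
    have hdd := G.degree_le_maxDegree u₁
    omega
  have cardO₂ : O₂.ncard ≤ k - 2 := by
    have hsub : O₂ ⊆ (fun y => φ u₂ y) '' {y | G.Adj u₂ y ∧ y ≠ v} := by
      rintro c ⟨y, hy, hyv, rfl⟩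
      exact ⟨y, ⟨(adjIff₂ y).mp hy, hyv⟩, rfl⟩
    have h1' := Set.ncard_le_ncard hsub (Set.toFinite _)
    have h2' := Set.ncard_image_le (s := {y | G.Adj u₂ y ∧ y ≠ v}) (f := fun y => φ u₂ y) (Set.toFinite _)
    rw [erase_card u₂ h2] at h2'
    omega
  have cardO₃ : O₃.ncard ≤ k - 1 := by
    have hsub : O₃ ⊆ (fun y => φ u₃ y) '' {y | G.Adj u₃ y ∧ y ≠ v} := by
      rintro c ⟨y, hy, hyv, rfl⟩
      exact ⟨y, ⟨(adjIff₃ y).mp hy, hyv⟩, rfl⟩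
    have h1' := Set.ncard_le_ncard hsub (Set.toFinite _)
    have h2' := Set.ncard_image_le (s := {y | G.Adj u₃ y ∧ y ≠ v}) (f := fun y => φ u₃ y) (Set.toFinite _)
    rw [erase_card u₃ h3] at h2'
    have hdd := G.degree_le_maxDegree u₃
    omega
  -- choice of a fresh color
  have hex : ∀ S : Set (Fin (k+3)), S.ncard ≤ k + 2 → ∃ c, c ∉ S := by
    intro S hS
    by_contra hc
    push_neg at hc
    have hsub : (Set.univ : Set (Fin (k+3))) ⊆ S := fun c _ => hc c
    have h2' := Set.ncard_le_ncard hsub (Set.toFinite _)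
    rw [Set.ncard_univ, Nat.card_eq_fintype_card, Fintype.card_fin] at h2'
    omega
  -- small set cardinalities
  have card1 : ∀ x : Fin (k+3), ({x} : Set (Fin (k+3))).ncard ≤ 1 :=
    fun x => le_of_eq (Set.ncard_singleton x)
  have card2 : ∀ x y : Fin (k+3), ({x, y} : Set (Fin (k+3))).ncard ≤ 2 := by
    intro x y
    have i1 := Set.ncard_insert_le x ({y} : Set (Fin (k+3)))
    have i2 := Set.ncard_singleton y
    omega
  have card4 : ∀ x y z w : Fin (k+3), ({x, y, z, w} : Set (Fin (k+3))).ncard ≤ 4 := by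
    intro x y z w
    have i1 := Set.ncard_insert_le x ({y, z, w} : Set (Fin (k+3)))
    have i2 := Set.ncard_insert_le y ({z, w} : Set (Fin (k+3)))
    have i3 := Set.ncard_insert_le z ({w} : Set (Fin (k+3)))
    have i4 := Set.ncard_singleton w
    omega
  have card5 : ∀ x y z w t : Fin (k+3), ({x, y, z, w, t} : Set (Fin (k+3))).ncard ≤ 5 := by
    intro x y z w t
    have i1 := Set.ncard_insert_le x ({y, z, w, t} : Set (Fin (k+3)))
    have i2 := card4 y z w t
    omega
  -- choosing the last color c₁
  have getc₁ : ∀ af bf c₂ : Fin (k+3), (c₂ ∈ A ∨ A.ncard ≤ 2) →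
      ∃ c₁ : Fin (k+3), c₁ ∉ A ∧ c₁ ∉ B ∧ c₁ ≠ af ∧ c₁ ≠ bf ∧ c₁ ≠ c₂ := by
    intro af bf c₂ hc
    have hcard : (A ∪ B ∪ {af, bf, c₂}).ncard ≤ k + 2 := by
      rcases hc with hc | hc
      · have hsub : A ∪ B ∪ {af, bf, c₂} ⊆ (A ∪ B) ∪ {af, bf} := by
          rintro c ((h | h) | h)
          · exact Or.inl (Or.inl h)
          · exact Or.inl (Or.inr h)
          · rcases h with rfl | rfl | rfl
            · exact Or.inr (Or.inl rfl)
            · exact Or.inr (Or.inr rfl)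
            · exact Or.inl (Or.inl hc)
        have h1' := Set.ncard_le_ncard hsub (Set.toFinite _)
        have h2' := Set.ncard_union_le (A ∪ B) ({af, bf} : Set (Fin (k+3)))
        have h3' := Set.ncard_union_le A B
        have h4' := card2 af bf
        omega
      · have h2' := Set.ncard_union_le (A ∪ B) ({af, bf, c₂} : Set (Fin (k+3)))
        have h3' := Set.ncard_union_le A B
        have h4' : ({af, bf, c₂} : Set (Fin (k+3))).ncard ≤ 3 := by
          have i1 := Set.ncard_insert_le af ({bf, c₂} : Set (Fin (k+3)))
          have i2 := card2 bf c₂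
          omega
        omega
    obtain ⟨c₁, hc₁⟩ := hex _ hcard
    simp only [Set.mem_union, Set.mem_insert_iff, Set.mem_singleton_iff, not_or] at hc₁
    exact ⟨c₁, hc₁.1.1, hc₁.1.2, hc₁.2.1, hc₁.2.2.1, hc₁.2.2.2⟩
  -- L-condition helpers
  have mkL1 : ∀ c₂ : Fin (k+3), (c₂ ∈ A ∨ A.ncard ≤ 2) → (A ∪ {c₂}).ncard ≤ 3 := by
    intro c₂ hc
    rcases hc with hc | hc
    · rw [Set.union_singleton, Set.insert_eq_self.mpr hc]; exact lA
    · have h2' := Set.ncard_union_le A ({c₂} : Set (Fin (k+3)))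
      have h3' := card1 c₂
      omega
  have mkL2 : ∀ af : Fin (k+3), (af = a ∨ af ∈ I₂ ∨ I₂.ncard ≤ 2) → (I₂ ∪ {af}).ncard ≤ 3 := by
    intro af hc
    rcases hc with rfl | hc | hc
    · exact lI₂
    · rw [Set.union_singleton, Set.insert_eq_self.mpr hc]; exact lI₂o
    · have h2' := Set.ncard_union_le I₂ ({af} : Set (Fin (k+3)))
      have h3' := card1 af
      omega
  have mkL3 : ∀ bf : Fin (k+3), (bf = b ∨ bf ∈ I₃ ∨ I₃.ncard ≤ 2) → (I₃ ∪ {bf}).ncard ≤ 3 := by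
    intro bf hc
    rcases hc with rfl | hc | hc
    · exact lI₃
    · rw [Set.union_singleton, Set.insert_eq_self.mpr hc]; exact lI₃o
    · have h2' := Set.ncard_union_le I₃ ({bf} : Set (Fin (k+3)))
      have h3' := card1 bf
      omega
  have card3 : ∀ x y z : Fin (k+3), ({x, y, z} : Set (Fin (k+3))).ncard ≤ 3 := by
    intro x y z
    have i1 := Set.ncard_insert_le x ({y, z} : Set (Fin (k+3)))
    have i2 := card2 y z
    omega
  have full_le : ∀ {S : Set (Fin (k+3))}, (∀ c, c ∈ S) → k + 3 ≤ S.ncard := by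
    intro S hS
    have hsub : (Set.univ : Set (Fin (k+3))) ⊆ S := fun c _ => hS c
    have h2' := Set.ncard_le_ncard hsub (Set.toFinite _)
    rwa [Set.ncard_univ, Nat.card_eq_fintype_card, Fintype.card_fin] at h2'
  have shrink : ∀ (S T : Set (Fin (k+3))), (∀ c : Fin (k+3), c ∈ S) → S ⊆ T →
      T.ncard ≤ k + 2 → False := by
    intro S T hfull hsub hT
    have h1' := Set.ncard_le_ncard hsub (Set.toFinite _)
    have h2' := full_le hfull
    omega
  have bnd_u3 : ∀ x y z : Fin (k+3), (O₃ ∪ {x, y, z}).ncard ≤ k + 2 := by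
    intro x y z
    have h1' := Set.ncard_union_le O₃ ({x, y, z} : Set (Fin (k+3)))
    have h2' := card3 x y z
    clear * - h1' h2' hk cardO₃
    omega
  have bnd_u24 : ∀ x y z w : Fin (k+3), (O₂ ∪ {x, y, z, w}).ncard ≤ k + 2 := by
    intro x y z w
    have h1' := Set.ncard_union_le O₂ ({x, y, z, w} : Set (Fin (k+3)))
    have h2' := card4 x y z w
    clear * - h1' h2' hk cardO₂
    omega
  have bnd_OI1 : ∀ x : Fin (k+3), (O₂ ∪ I₂ ∪ {x}).ncard ≤ k + 2 := by
    intro x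
    have h1' := Set.ncard_union_le (O₂ ∪ I₂) ({x} : Set (Fin (k+3)))
    have h2' := Set.ncard_union_le O₂ I₂
    have h3' := card1 x
    clear * - h1' h2' h3' hk cardO₂ lI₂o
    omega
  have notO₃sat : (∀ c : Fin (k+3), c ∈ O₃ ∪ {q, a, b, p}) → a ∉ O₃ ∧ p ∉ O₃ ∧ p ≠ q := by
    intro hfull
    have key : ∀ x y z : Fin (k+3), (O₃ ∪ {q, a, b, p} ⊆ O₃ ∪ {x, y, z}) → False := by
      intro x y z hsub
      exact shrink _ _ hfull hsub (bnd_u3 x y z)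
    refine ⟨?_, ?_, ?_⟩
    · intro hmem
      refine key q b p ?_
      rintro c (h | hc)
      · exact Set.mem_union_left _ h
      · rcases hc with rfl | rfl | rfl | rfl
        · exact Set.mem_union_right _ (Set.mem_insert _ _)
        · exact Set.mem_union_left _ hmem
        · exact Set.mem_union_right _ (Set.mem_insert_of_mem _ (Set.mem_insert _ _))
        · exact Set.mem_union_right _ (Set.mem_insert_of_mem _ (Set.mem_insert_of_mem _ rfl))
    · intro hmem
      refine key q a b ?_
      rintro c (h | hc)
      · exact Set.mem_union_left _ h
      · rcases hc with rfl | rfl | rfl | rfl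
        · exact Set.mem_union_right _ (Set.mem_insert _ _)
        · exact Set.mem_union_right _ (Set.mem_insert_of_mem _ (Set.mem_insert _ _))
        · exact Set.mem_union_right _ (Set.mem_insert_of_mem _ (Set.mem_insert_of_mem _ rfl))
        · exact Set.mem_union_left _ hmem
    · intro hpq0
      refine key q a b ?_
      rintro c (h | hc)
      · exact Set.mem_union_left _ h
      · rcases hc with rfl | rfl | rfl | rfl
        · exact Set.mem_union_right _ (Set.mem_insert _ _)
        · exact Set.mem_union_right _ (Set.mem_insert_of_mem _ (Set.mem_insert _ _))
        · exact Set.mem_union_right _ (Set.mem_insert_of_mem _ (Set.mem_insert_of_mem _ rfl))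
        · refine Set.mem_union_right _ ?_
          rw [hpq0]
          exact Set.mem_insert _ _
  -- extraction of a recoloring value in I₂ distinct from a and q
  have getA'' : 3 ≤ I₂.ncard → ∃ t, t ∈ I₂ ∧ t ≠ a ∧ t ≠ q := by
    intro h3
    by_contra hcon
    push_neg at hcon
    have hsu : I₂ ⊆ {a, q} := by
      intro t ht
      by_cases hta : t = a
      · exact Or.inl hta
      · exact Or.inr (hcon t ht hta)
    have hc1 := Set.ncard_le_ncard hsu (Set.toFinite _)
    have hc2 := card2 a q
    clear * - hc1 hc2 h3
    omega
  ----------------------------------------------------------------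
  -- reusable leaves
  ----------------------------------------------------------------
  -- Leaf P : c₂ = p, recolor p → p'
  have leafP : ∀ p' : Fin (k+3), p' ∉ O₂ ∪ I₂ ∪ {b, p} → p ∈ A → p ≠ q → a ∈ I₂ →
      HasIncidenceColoring G (k+3) 3 := by
    intro p' hp' hpA hpq haI₂
    simp only [Set.mem_union, Set.mem_insert_iff, Set.mem_singleton_iff, not_or] at hp'
    obtain ⟨⟨hpO, hpI⟩, hpb, hpp⟩ := hp'
    obtain ⟨c₁, hc₁A, hc₁B, hc₁af, hc₁bf, hc₁c₂⟩ := getc₁ a b p (Or.inl hpA)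
    exact master G v u₁ u₂ u₃ φ c₁ p a p' b q h1 h2 h3 h12 h13 h23 hnv hφ hℓ
      hc₁af hc₁bf hc₁c₂
      (Ne.symm fap) (Ne.symm fbp) (fun h => hpp h.symm) hpq
      (fun h => hpI (h ▸ haI₂)) fab faq fbq (fun h => hpb h.symm)
      (cA hc₁A) (cB hc₁B) (vA hpA)
      (cO₂ faO₂) (cO₃ fbO₃) (cO₂ hpO) (cI₂ hpI) (cO₃ fqO₃) (cI₃ fqI₃)
      (mkL1 p (Or.inl hpA)) (mkL2 a (Or.inl rfl)) (mkL3 b (Or.inl rfl))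
  -- Leaf B : c₂ = b, recolor b → b'
  have leafB : ∀ b' : Fin (k+3), b' ∉ O₃ ∪ {q, a, b, p} → (b' ∈ I₃ ∨ I₃.ncard ≤ 2) →
      b ∈ A → HasIncidenceColoring G (k+3) 3 := by
    intro b' hb' hbl hbA
    simp only [Set.mem_union, Set.mem_insert_iff, Set.mem_singleton_iff, not_or] at hb'
    obtain ⟨hbO, hbq, hba, hbb, hbp'⟩ := hb'
    obtain ⟨c₁, hc₁A, hc₁B, hc₁af, hc₁bf, hc₁c₂⟩ := getc₁ a b' b (Or.inl hbA)
    exact master G v u₁ u₂ u₃ φ c₁ b a p b' q h1 h2 h3 h12 h13 h23 hnv hφ hℓ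
      hc₁af hc₁bf hc₁c₂
      (Ne.symm fab) (fun h => hbb h.symm) fbp fbq
      fap (fun h => hba h.symm) faq
      hbq hbp'
      (cA hc₁A) (cB hc₁B) (vA hbA)
      (cO₂ faO₂) (cO₃ hbO) (cO₂ fpO₂) (cI₂ fpI₂) (cO₃ fqO₃) (cI₃ fqI₃)
      (mkL1 b (Or.inl hbA)) (mkL2 a (Or.inl rfl)) (mkL3 b' (Or.inr hbl))
  -- Leaf Q : c₂ = q, recolor q → q'
  have leafQ : ∀ q' : Fin (k+3), q' ∉ O₃ ∪ I₃ ∪ {a, b, q} → q ∈ A → p ≠ q →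
      HasIncidenceColoring G (k+3) 3 := by
    intro q' hq' hqA hpq
    simp only [Set.mem_union, Set.mem_insert_iff, Set.mem_singleton_iff, not_or] at hq'
    obtain ⟨⟨hqO, hqI⟩, hqa, hqb, hqq⟩ := hq'
    obtain ⟨c₁, hc₁A, hc₁B, hc₁af, hc₁bf, hc₁c₂⟩ := getc₁ a b q (Or.inl hqA)
    exact master G v u₁ u₂ u₃ φ c₁ q a p b q' h1 h2 h3 h12 h13 h23 hnv hφ hℓ
      hc₁af hc₁bf hc₁c₂
      (Ne.symm faq) (Ne.symm fbq) (Ne.symm hpq) (fun h => hqq h.symm)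
      fap fab (fun h => hqa h.symm)
      (fun h => hqb h.symm) fbp
      (cA hc₁A) (cB hc₁B) (vA hqA)
      (cO₂ faO₂) (cO₃ fbO₃) (cO₂ fpO₂) (cI₂ fpI₂) (cO₃ hqO) (cI₃ hqI)
      (mkL1 q (Or.inl hqA)) (mkL2 a (Or.inl rfl)) (mkL3 b (Or.inl rfl))
  ----------------------------------------------------------------
  -- main case analysis
  ----------------------------------------------------------------
  by_cases hA2 : A.ncard ≤ 2
  · -- Leaf 1 : |A| ≤ 2, fresh c₂
    have bnd1 : (B ∪ {a, b, p, q}).ncard ≤ k + 2 := by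
      have h1' := Set.ncard_union_le B ({a, b, p, q} : Set (Fin (k+3)))
      have h2' := card4 a b p q
      clear * - h1' h2' hk cardB
      omega
    obtain ⟨c₂, hc₂⟩ := hex (B ∪ {a, b, p, q}) bnd1
    simp only [Set.mem_union, Set.mem_insert_iff, Set.mem_singleton_iff, not_or] at hc₂
    obtain ⟨hcB2, hca, hcb, hcp, hcq⟩ := hc₂
    obtain ⟨c₁, hc₁A, hc₁B, hc₁af, hc₁bf, hc₁c₂⟩ := getc₁ a b c₂ (Or.inr hA2)
    exact master G v u₁ u₂ u₃ φ c₁ c₂ a p b q h1 h2 h3 h12 h13 h23 hnv hφ hℓ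
      hc₁af hc₁bf hc₁c₂
      hca hcb hcp hcq
      fap fab faq fbq fbp
      (cA hc₁A) (cB hc₁B) (cB hcB2)
      (cO₂ faO₂) (cO₃ fbO₃) (cO₂ fpO₂) (cI₂ fpI₂) (cO₃ fqO₃) (cI₃ fqI₃)
      (mkL1 c₂ (Or.inr hA2)) (mkL2 a (Or.inl rfl)) (mkL3 b (Or.inl rfl))
  · by_cases hAex : ∃ t ∈ A, t ≠ a ∧ t ≠ b ∧ t ≠ p ∧ t ≠ q
    · -- Leaf 2 : c₂ = t ∈ A avoiding all blockers
      obtain ⟨t, htA, hta, htb, htp, htq⟩ := hAex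
      obtain ⟨c₁, hc₁A, hc₁B, hc₁af, hc₁bf, hc₁c₂⟩ := getc₁ a b t (Or.inl htA)
      exact master G v u₁ u₂ u₃ φ c₁ t a p b q h1 h2 h3 h12 h13 h23 hnv hφ hℓ
        hc₁af hc₁bf hc₁c₂
        hta htb htp htq
        fap fab faq fbq fbp
        (cA hc₁A) (cB hc₁B) (vA htA)
        (cO₂ faO₂) (cO₃ fbO₃) (cO₂ fpO₂) (cI₂ fpI₂) (cO₃ fqO₃) (cI₃ fqI₃)
        (mkL1 t (Or.inl htA)) (mkL2 a (Or.inl rfl)) (mkL3 b (Or.inl rfl))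
    · have hAsub : ∀ t ∈ A, t = a ∨ t = b ∨ t = p ∨ t = q := by
        intro t ht
        by_contra hcon
        push_neg at hcon
        exact hAex ⟨t, ht, hcon.1, hcon.2.1, hcon.2.2.1, hcon.2.2.2⟩
      have hA3 : 3 ≤ A.ncard := by clear * - lA hA2; omega
      by_cases haA : a ∈ A
      · -- Case 3A
        by_cases ha' : ∃ a', (a' ∉ O₂ ∪ {p, b, a, q}) ∧ (a' ∈ I₂ ∨ I₂.ncard ≤ 2)
        · -- Leaf 3 : c₂ = a, recolor a → a'
          obtain ⟨a', ha'p, ha'l⟩ := ha'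
          simp only [Set.mem_union, Set.mem_insert_iff, Set.mem_singleton_iff, not_or] at ha'p
          obtain ⟨haO, hap, hab, haa, haq⟩ := ha'p
          obtain ⟨c₁, hc₁A, hc₁B, hc₁af, hc₁bf, hc₁c₂⟩ := getc₁ a' b a (Or.inl haA)
          exact master G v u₁ u₂ u₃ φ c₁ a a' p b q h1 h2 h3 h12 h13 h23 hnv hφ hℓ
            hc₁af hc₁bf hc₁c₂
            (fun h => haa h.symm) fab fap faq
            hap hab haq
            fbq fbp
            (cA hc₁A) (cB hc₁B) (vA haA)
            (cO₂ haO) (cO₃ fbO₃) (cO₂ fpO₂) (cI₂ fpI₂) (cO₃ fqO₃) (cI₃ fqI₃)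
            (mkL1 a (Or.inl haA)) (mkL2 a' (Or.inr ha'l)) (mkL3 b (Or.inl rfl))
        · -- recolor-a impossible: I₂ = {a, b, q}
          have hI₂3 : 3 ≤ I₂.ncard := by
            by_contra hcon
            push_neg at hcon
            obtain ⟨a', ha2⟩ := hex (O₂ ∪ {p, b, a, q}) (bnd_u24 p b a q)
            exact ha' ⟨a', ha2, Or.inr (by clear * - hcon; omega)⟩
          have hI₂sub : I₂ ⊆ {a, b, q} := by
            intro t ht
            by_contra htn
            simp only [Set.mem_insert_iff, Set.mem_singleton_iff, not_or] at htn
            refine ha' ⟨t, ?_, Or.inl ht⟩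
            simp only [Set.mem_union, Set.mem_insert_iff, Set.mem_singleton_iff, not_or]
            exact ⟨fun hO => (fO₂I₂ hO ht) rfl, fun h => (vI₂p ht) h.symm,
              htn.2.1, htn.1, htn.2.2⟩
          have hI₂abq : I₂ = {a, b, q} :=
            Set.eq_of_subset_of_ncard_le hI₂sub (le_trans (card3 a b q) hI₂3) (Set.toFinite _)
          have haI₂ : a ∈ I₂ := by rw [hI₂abq]; simp
          have poolT : ∀ S : Set (Fin (k+3)), S = O₂ ∪ I₂ ∪ {b, p} →
              (S ∪ {a}).ncard ≤ k + 2 := by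
            intro S hS
            have hsub : S ∪ {a} ⊆ O₂ ∪ {a, b, q, p} := by
              rw [hS, hI₂abq]
              rintro c (((h | hc) | hc2) | rfl)
              · exact Set.mem_union_left _ h
              · rcases hc with rfl | rfl | rfl
                · exact Set.mem_union_right _ (Set.mem_insert _ _)
                · exact Set.mem_union_right _ (Set.mem_insert_of_mem _ (Set.mem_insert _ _))
                · exact Set.mem_union_right _
                    (Set.mem_insert_of_mem _ (Set.mem_insert_of_mem _ (Set.mem_insert _ _)))
              · rcases hc2 with rfl | rfl
                · exact Set.mem_union_right _ (Set.mem_insert_of_mem _ (Set.mem_insert _ _))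
                · exact Set.mem_union_right _
                    (Set.mem_insert_of_mem _ (Set.mem_insert_of_mem _ (Set.mem_insert_of_mem _ rfl)))
              · exact Set.mem_union_right _ (Set.mem_insert _ _)
            exact le_trans (Set.ncard_le_ncard hsub (Set.toFinite _)) (bnd_u24 a b q p)
          by_cases hpA : p ∈ A ∧ p ≠ q
          · -- Leaf 5 via absorbed pool
            obtain ⟨p', hp'⟩ := hex ((O₂ ∪ I₂ ∪ {b, p}) ∪ {a}) (poolT _ rfl)
            exact leafP p' (fun hmem => hp' (Or.inl hmem)) hpA.1 hpA.2 haI₂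
          · -- A = {a, b, q}
            have hAabq : A ⊆ {a, b, q} := by
              intro t ht
              rcases hAsub t ht with h | h | h | h
              · exact Or.inl h
              · exact Or.inr (Or.inl h)
              · have hpq' : p = q := by
                  by_contra hne
                  exact hpA ⟨h ▸ ht, hne⟩
                exact Or.inr (Or.inr (h.trans hpq'))
              · exact Or.inr (Or.inr h)
            have hAeq : A = {a, b, q} :=
              Set.eq_of_subset_of_ncard_le hAabq (le_trans (card3 a b q) hA3) (Set.toFinite _)
            have hbA : b ∈ A := by rw [hAeq]; simp
            have hqA : q ∈ A := by rw [hAeq]; simp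
            by_cases hpI₃ : p ∈ I₃
            · -- Leaf 8 (T-i*) : c₂ = b, bf = p, recolor p → p'
              have hpq : p ≠ q := fun h => fqI₃ (h ▸ hpI₃)
              have hpO₃ : p ∉ O₃ := fun h => (fO₃I₃ h hpI₃) rfl
              obtain ⟨p', hp'⟩ := hex ((O₂ ∪ I₂ ∪ {b, p}) ∪ {a}) (poolT _ rfl)
              simp only [Set.mem_union, Set.mem_insert_iff, Set.mem_singleton_iff, not_or] at hp'
              obtain ⟨⟨⟨hpO, hpI⟩, hpb, hpp⟩, hpa⟩ := hp'
              obtain ⟨c₁, hc₁A, hc₁B, hc₁af, hc₁bf, hc₁c₂⟩ := getc₁ a p b (Or.inl hbA)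
              exact master G v u₁ u₂ u₃ φ c₁ b a p' p q h1 h2 h3 h12 h13 h23 hnv hφ hℓ
                hc₁af hc₁bf hc₁c₂
                (Ne.symm fab) fbp (fun h => hpb h.symm) fbq
                (fun h => hpa h.symm) fap faq
                hpq (fun h => hpp h.symm)
                (cA hc₁A) (cB hc₁B) (vA hbA)
                (cO₂ faO₂) (cO₃ hpO₃) (cO₂ hpO) (cI₂ hpI) (cO₃ fqO₃) (cI₃ fqI₃)
                (mkL1 b (Or.inl hbA)) (mkL2 a (Or.inl rfl)) (mkL3 p (Or.inr (Or.inl hpI₃)))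
            · -- T2
              by_cases hb' : ∃ b', (b' ∉ O₃ ∪ {q, a, b, p}) ∧ (b' ∈ I₃ ∨ I₃.ncard ≤ 2)
              · obtain ⟨b', hb'p, hb'l⟩ := hb'
                exact leafB b' hb'p hb'l hbA
              · -- T2b
                have hI₃2 : I₃.ncard ≤ 2 := by
                  by_contra hcon
                  push_neg at hcon
                  have hsu : I₃ ⊆ {a, b} := by
                    intro t ht
                    by_contra htn
                    simp only [Set.mem_insert_iff, Set.mem_singleton_iff, not_or] at htn
                    refine hb' ⟨t, ?_, Or.inl ht⟩
                    simp only [Set.mem_union, Set.mem_insert_iff, Set.mem_singleton_iff, not_or]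
                    exact ⟨fun hO => (fO₃I₃ hO ht) rfl, fun h => (vI₃q ht) h.symm,
                      htn.1, htn.2, fun h => hpI₃ (h ▸ ht)⟩
                  have hc1 := Set.ncard_le_ncard hsu (Set.toFinite _)
                  have hc2 := card2 a b
                  clear * - hc1 hc2 hcon
                  omega
                have hSBfull : ∀ c : Fin (k+3), c ∈ O₃ ∪ {q, a, b, p} := by
                  intro c
                  by_contra hc
                  exact hb' ⟨c, hc, Or.inr hI₃2⟩
                obtain ⟨-, hpO₃, hpq⟩ := notO₃sat hSBfull
                refine leafQ p ?_ hqA hpq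
                simp only [Set.mem_union, Set.mem_insert_iff, Set.mem_singleton_iff, not_or]
                exact ⟨⟨hpO₃, hpI₃⟩, Ne.symm fap, Ne.symm fbp, hpq⟩
      · -- Case 3B : a ∉ A, so A = {b, p, q}
        have hAsub' : A ⊆ {b, p, q} := by
          intro t ht
          rcases hAsub t ht with h | h | h | h
          · exact absurd (h ▸ ht) haA
          · exact Or.inl h
          · exact Or.inr (Or.inl h)
          · exact Or.inr (Or.inr h)
        have hAeq : A = {b, p, q} :=
          Set.eq_of_subset_of_ncard_le hAsub' (le_trans (card3 b p q) hA3) (Set.toFinite _)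
        have hbA : b ∈ A := by rw [hAeq]; simp
        have hpA : p ∈ A := by rw [hAeq]; simp
        have hqA : q ∈ A := by rw [hAeq]; simp
        have hpq : p ≠ q := by
          intro hpq0
          have hsu : A ⊆ {b, p} := by
            rw [hAeq]; intro c
            simp only [Set.mem_insert_iff, Set.mem_singleton_iff]
            rintro (rfl | rfl | rfl)
            · exact Or.inl rfl
            · exact Or.inr rfl
            · exact Or.inr hpq0.symm
          have hc1 := Set.ncard_le_ncard hsu (Set.toFinite _)
          have hc2 := card2 b p
          clear * - hc1 hc2 hA3
          omega
        by_cases hI₂2 : I₂.ncard ≤ 2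
        · -- Leaf 4 (L-PA) : c₂ = p, recolor p → p' and a → a''
          have bnd3 : (O₂ ∪ I₂ ∪ {b, p}).ncard ≤ k + 2 := by
            have h1' := Set.ncard_union_le (O₂ ∪ I₂) ({b, p} : Set (Fin (k+3)))
            have h2' := Set.ncard_union_le O₂ I₂
            have h3' := card2 b p
            clear * - h1' h2' h3' hk cardO₂ hI₂2
            omega
          obtain ⟨p', hp'⟩ := hex (O₂ ∪ I₂ ∪ {b, p}) bnd3
          simp only [Set.mem_union, Set.mem_insert_iff, Set.mem_singleton_iff, not_or] at hp'
          obtain ⟨⟨hpO, hpI⟩, hpb, hpp⟩ := hp'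
          obtain ⟨a'', ha''⟩ := hex (O₂ ∪ {p', b, p, q}) (bnd_u24 p' b p q)
          simp only [Set.mem_union, Set.mem_insert_iff, Set.mem_singleton_iff, not_or] at ha''
          obtain ⟨haO, hap', hab, hap, haq⟩ := ha''
          obtain ⟨c₁, hc₁A, hc₁B, hc₁af, hc₁bf, hc₁c₂⟩ := getc₁ a'' b p (Or.inl hpA)
          exact master G v u₁ u₂ u₃ φ c₁ p a'' p' b q h1 h2 h3 h12 h13 h23 hnv hφ hℓ
            hc₁af hc₁bf hc₁c₂
            (fun h => hap h.symm) (Ne.symm fbp) (fun h => hpp h.symm) hpq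
            hap' hab haq
            fbq (fun h => hpb h.symm)
            (cA hc₁A) (cB hc₁B) (vA hpA)
            (cO₂ haO) (cO₃ fbO₃) (cO₂ hpO) (cI₂ hpI) (cO₃ fqO₃) (cI₃ fqI₃)
            (mkL1 p (Or.inl hpA)) (mkL2 a'' (Or.inr (Or.inr hI₂2))) (mkL3 b (Or.inl rfl))
        · have hI₂3 : 3 ≤ I₂.ncard := by clear * - hI₂2; omega
          have haI₂ : a ∈ I₂ := by
            by_contra hcon
            have heq : (I₂ ∪ {a}).ncard = I₂.ncard + 1 := by
              rw [Set.union_singleton, Set.ncard_insert_of_notMem hcon (Set.toFinite _)]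
            clear * - heq lI₂ hI₂2
            omega
          by_cases hp' : ∃ p', p' ∉ O₂ ∪ I₂ ∪ {b, p}
          · obtain ⟨p', hp'⟩ := hp'
            exact leafP p' hp' hpA hpq haI₂
          · -- S_P saturated
            have hSPfull : ∀ c : Fin (k+3), c ∈ O₂ ∪ I₂ ∪ {b, p} := by
              intro c
              by_contra hc
              exact hp' ⟨c, hc⟩
            have hbOI : b ∉ O₂ ∪ I₂ := by
              intro hmem
              refine shrink (O₂ ∪ I₂ ∪ {b, p}) (O₂ ∪ I₂ ∪ {p}) hSPfull ?_ (bnd_OI1 p)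
              rintro c (h | hc)
              · exact Set.mem_union_left _ h
              · rcases hc with rfl | rfl
                · exact Set.mem_union_left _ hmem
                · exact Set.mem_union_right _ rfl
            have hbI₂ : b ∉ I₂ := fun h => hbOI (Set.mem_union_right _ h)
            by_cases hb' : ∃ b', (b' ∉ O₃ ∪ {q, a, b, p}) ∧ (b' ∈ I₃ ∨ I₃.ncard ≤ 2)
            · obtain ⟨b', hb'p, hb'l⟩ := hb'
              exact leafB b' hb'p hb'l hbA
            · by_cases hq' : ∃ q', q' ∉ O₃ ∪ I₃ ∪ {a, b, q}
              · obtain ⟨q', hq'⟩ := hq'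
                exact leafQ q' hq' hqA hpq
              · have hSQfull : ∀ c : Fin (k+3), c ∈ O₃ ∪ I₃ ∪ {a, b, q} := by
                  intro c
                  by_contra hc
                  exact hq' ⟨c, hc⟩
                obtain ⟨a'', ha''I₂, ha''a, ha''q⟩ := getA'' hI₂3
                have ha''b : a'' ≠ b := fun h => hbI₂ (h ▸ ha''I₂)
                by_cases hI₃2 : I₃.ncard ≤ 2
                · -- case iii-2
                  have hSBfull : ∀ c : Fin (k+3), c ∈ O₃ ∪ {q, a, b, p} := by
                    intro c
                    by_contra hc
                    exact hb' ⟨c, hc, Or.inr hI₃2⟩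
                  obtain ⟨haO₃, hpO₃, -⟩ := notO₃sat hSBfull
                  have hpI₃ : p ∈ I₃ := by
                    rcases hSQfull p with (h | h) | h
                    · exact absurd h hpO₃
                    · exact h
                    · rcases h with h | h | h
                      · exact absurd h (Ne.symm fap)
                      · exact absurd h (Ne.symm fbp)
                      · exact absurd h hpq
                  by_cases hbI₃ : b ∈ I₃
                  · -- Leaf 11 (ii-b) : c₂ = q, qf = a, af = a''
                    have haI₃ : a ∉ I₃ := by
                      intro hmem
                      have hsu : ({a, b, p} : Set (Fin (k+3))) ⊆ I₃ := by
                        intro c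
                        simp only [Set.mem_insert_iff, Set.mem_singleton_iff]
                        rintro (rfl | rfl | rfl)
                        exacts [hmem, hbI₃, hpI₃]
                      have hc1 := Set.ncard_le_ncard hsu (Set.toFinite _)
                      have hc2 : ({a, b, p} : Set (Fin (k+3))).ncard = 3 := by
                        rw [Set.ncard_insert_of_notMem (by simp [fab, fap]) (Set.toFinite _),
                          Set.ncard_insert_of_notMem (by simp [fbp]) (Set.toFinite _),
                          Set.ncard_singleton]
                      clear * - hc1 hc2 hI₃2
                      omega
                    obtain ⟨c₁, hc₁A, hc₁B, hc₁af, hc₁bf, hc₁c₂⟩ := getc₁ a'' b q (Or.inl hqA)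
                    exact master G v u₁ u₂ u₃ φ c₁ q a'' p b a h1 h2 h3 h12 h13 h23 hnv hφ hℓ
                      hc₁af hc₁bf hc₁c₂
                      (Ne.symm ha''q) (Ne.symm fbq) (Ne.symm hpq) (Ne.symm faq)
                      (Ne.symm (vI₂p ha''I₂)) ha''b ha''a
                      (Ne.symm fab) fbp
                      (cA hc₁A) (cB hc₁B) (vA hqA)
                      (vI₂O ha''I₂) (cO₃ fbO₃) (cO₂ fpO₂) (cI₂ fpI₂) (cO₃ haO₃) (cI₃ haI₃)
                      (mkL1 q (Or.inl hqA)) (mkL2 a'' (Or.inr (Or.inl ha''I₂)))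
                      (mkL3 b (Or.inl rfl))
                  · -- Leaf 10 (ii-a) : c₂ = q, qf = b, bf = a, af = a''
                    obtain ⟨c₁, hc₁A, hc₁B, hc₁af, hc₁bf, hc₁c₂⟩ := getc₁ a'' a q (Or.inl hqA)
                    exact master G v u₁ u₂ u₃ φ c₁ q a'' p a b h1 h2 h3 h12 h13 h23 hnv hφ hℓ
                      hc₁af hc₁bf hc₁c₂
                      (Ne.symm ha''q) (Ne.symm faq) (Ne.symm hpq) (Ne.symm fbq)
                      (Ne.symm (vI₂p ha''I₂)) ha''a ha''b
                      fab fap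
                      (cA hc₁A) (cB hc₁B) (vA hqA)
                      (vI₂O ha''I₂) (cO₃ haO₃) (cO₂ fpO₂) (cI₂ fpI₂) (cO₃ fbO₃) (cI₃ hbI₃)
                      (mkL1 q (Or.inl hqA)) (mkL2 a'' (Or.inr (Or.inl ha''I₂)))
                      (mkL3 a (Or.inr (Or.inr hI₃2)))
                · -- case iii-1 : I₃ = {a, b, p}
                  have hI₃3 : 3 ≤ I₃.ncard := by clear * - hI₃2; omega
                  have hI₃sub : I₃ ⊆ {a, b, p} := by
                    intro t ht
                    by_contra htn
                    simp only [Set.mem_insert_iff, Set.mem_singleton_iff, not_or] at htn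
                    refine hb' ⟨t, ?_, Or.inl ht⟩
                    simp only [Set.mem_union, Set.mem_insert_iff, Set.mem_singleton_iff, not_or]
                    exact ⟨fun hO => (fO₃I₃ hO ht) rfl, fun h => (vI₃q ht) h.symm,
                      htn.1, htn.2.1, htn.2.2⟩
                  have hI₃abp : I₃ = {a, b, p} :=
                    Set.eq_of_subset_of_ncard_le hI₃sub (le_trans (card3 a b p) hI₃3)
                      (Set.toFinite _)
                  have haI₃ : a ∈ I₃ := by rw [hI₃abp]; simp
                  have haO₃ : a ∉ O₃ := fun h => (fO₃I₃ h haI₃) rfl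
                  -- Leaf 9 (S-i) : c₂ = b, bf = a, af = a''
                  obtain ⟨c₁, hc₁A, hc₁B, hc₁af, hc₁bf, hc₁c₂⟩ := getc₁ a'' a b (Or.inl hbA)
                  exact master G v u₁ u₂ u₃ φ c₁ b a'' p a q h1 h2 h3 h12 h13 h23 hnv hφ hℓ
                    hc₁af hc₁bf hc₁c₂
                    (Ne.symm ha''b) (Ne.symm fab) fbp fbq
                    (Ne.symm (vI₂p ha''I₂)) ha''a ha''q
                    faq fap
                    (cA hc₁A) (cB hc₁B) (vA hbA)
                    (vI₂O ha''I₂) (cO₃ haO₃) (cO₂ fpO₂) (cI₂ fpI₂) (cO₃ fqO₃) (cI₃ fqI₃)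
                    (mkL1 b (Or.inl hbA)) (mkL2 a'' (Or.inr (Or.inl ha''I₂)))
                    (mkL3 a (Or.inr (Or.inl haI₃)))
end
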